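/- arXiv:2501.06542 — 2 statements merged into one kernel-verified Lean document; each statement's English description precedes it below -/
import Mathlib

section
/- Let u : ℝ × ℝ → ℝ be a smooth function, 2π-periodic in its second variable, not identically zero, such that u and all its partial derivatives up to second order are square-integrable against the weight e^{−y²/4} on ℝ × [0,2π]. If L u = λ·u pointwise for some real λ > 0, then either λ = 1 and u is a nonzero constant, or λ = 1/2 and there exist real numbers a, b, c, not all zero, with u(y,ϑ) = a·y + b·cos ϑ + c·sin ϑ for all (y,ϑ). In other words, the only unstable eigenfunctions of L are the constant 1 with eigenvalue 1 and the span of y, cos ϑ, sin ϑ with eigenvalue 1/2. -/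
open Real MeasureTheory

/-- The Ornstein–Uhlenbeck operator on the normalized round cylinder ℝ × S¹(√2):
`L u = ∂²_y u − (y/2) ∂_y u + (1/2) ∂²_ϑ u + u`. -/
noncomputable def OU (u : ℝ → ℝ → ℝ) (y ϑ : ℝ) : ℝ :=
  deriv (deriv (fun s => u s ϑ)) y - y / 2 * deriv (fun s => u s ϑ) y
    + 1 / 2 * deriv (deriv (fun t => u y t)) ϑ + u y ϑ

/-- Square-integrability against the Gaussian weight `e^{−y²/4}` on `ℝ × [0, 2π]`. -/
def gaussL2 (f : ℝ → ℝ → ℝ) : Prop :=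
  MeasureTheory.IntegrableOn
    (fun p : ℝ × ℝ => (f p.1 p.2) ^ 2 * Real.exp (-(p.1 ^ 2) / 4))
    (Set.univ ×ˢ Set.Icc 0 (2 * Real.pi))

noncomputable def pd1 (f : ℝ × ℝ → ℝ) (p : ℝ × ℝ) : ℝ := fderiv ℝ f p (1, 0)
noncomputable def pd2 (f : ℝ × ℝ → ℝ) (p : ℝ × ℝ) : ℝ := fderiv ℝ f p (0, 1)


lemma hasDerivAt_sect1 {f : ℝ × ℝ → ℝ} (hf : Differentiable ℝ f) (s t : ℝ) :
    HasDerivAt (fun s' => f (s', t)) (pd1 f (s, t)) s :=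
  (hf (s, t)).hasFDerivAt.comp_hasDerivAt s ((hasDerivAt_id s).prodMk (hasDerivAt_const s t))

lemma hasDerivAt_sect2 {f : ℝ × ℝ → ℝ} (hf : Differentiable ℝ f) (s t : ℝ) :
    HasDerivAt (fun t' => f (s, t')) (pd2 f (s, t)) t :=
  (hf (s, t)).hasFDerivAt.comp_hasDerivAt t ((hasDerivAt_const t s).prodMk (hasDerivAt_id t))

lemma deriv_sect1 {f : ℝ × ℝ → ℝ} (hf : Differentiable ℝ f) (s t : ℝ) :
    deriv (fun s' => f (s', t)) s = pd1 f (s, t) := (hasDerivAt_sect1 hf s t).deriv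

lemma deriv_sect2 {f : ℝ × ℝ → ℝ} (hf : Differentiable ℝ f) (s t : ℝ) :
    deriv (fun t' => f (s, t')) t = pd2 f (s, t) := (hasDerivAt_sect2 hf s t).deriv

lemma pd1_contDiff {f : ℝ × ℝ → ℝ} (hf : ContDiff ℝ (⊤ : ℕ∞) f) : ContDiff ℝ (⊤ : ℕ∞) (pd1 f) :=
  (hf.fderiv_right (by simp)).clm_apply contDiff_const

lemma pd2_contDiff {f : ℝ × ℝ → ℝ} (hf : ContDiff ℝ (⊤ : ℕ∞) f) : ContDiff ℝ (⊤ : ℕ∞) (pd2 f) :=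
  (hf.fderiv_right (by simp)).clm_apply contDiff_const

lemma pd_swap {f : ℝ × ℝ → ℝ} (hf : ContDiff ℝ (⊤ : ℕ∞) f) (p : ℝ × ℝ) :
    pd1 (pd2 f) p = pd2 (pd1 f) p := by
  have hfd : ContDiff ℝ (⊤ : ℕ∞) (fderiv ℝ f) := hf.fderiv_right (by simp)
  have hA : HasFDerivAt (fderiv ℝ f) (fderiv ℝ (fderiv ℝ f) p) p :=
    ((hfd.differentiable (by simp)) p).hasFDerivAt
  have h2 : HasFDerivAt (pd2 f) ((fderiv ℝ (fderiv ℝ f) p).flip ((0 : ℝ), (1 : ℝ))) p := by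
    have := hA.clm_apply (hasFDerivAt_const ((0 : ℝ), (1 : ℝ)) p)
    exact this.congr_fderiv (by simp)
  have h1 : HasFDerivAt (pd1 f) ((fderiv ℝ (fderiv ℝ f) p).flip ((1 : ℝ), (0 : ℝ))) p := by
    have := hA.clm_apply (hasFDerivAt_const ((1 : ℝ), (0 : ℝ)) p)
    exact this.congr_fderiv (by simp)
  have hsymm := second_derivative_symmetric (f := f) (f' := fderiv ℝ f)
    (f'' := fderiv ℝ (fderiv ℝ f) p) (x := p)
    (fun y => ((hf.differentiable (by simp)) y).hasFDerivAt) hA ((1 : ℝ), (0 : ℝ)) ((0 : ℝ), (1 : ℝ))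
  show fderiv ℝ (pd2 f) p (1, 0) = fderiv ℝ (pd1 f) p (0, 1)
  rw [h2.fderiv, h1.fderiv]
  simpa using hsymm

/-- One differentiation of the eigen-equation in the first variable. -/
lemma pdOU {U : ℝ × ℝ → ℝ} (hU : ContDiff ℝ (⊤ : ℕ∞) U) {μ : ℝ}
    (h : ∀ p : ℝ × ℝ, pd1 (pd1 U) p
      = μ * U p - U p + 1/2 * (p.1 * pd1 U p) - 1/2 * pd2 (pd2 U) p) :
    ∀ p : ℝ × ℝ, pd1 (pd1 (pd1 U)) p
      = (μ + 1/2) * pd1 U p - pd1 U p + 1/2 * (p.1 * pd1 (pd1 U) p)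
        - 1/2 * pd2 (pd2 (pd1 U)) p := by
  intro p
  have hU1 : ContDiff ℝ (⊤ : ℕ∞) (pd1 U) := pd1_contDiff hU
  have hU2 : ContDiff ℝ (⊤ : ℕ∞) (pd2 U) := pd2_contDiff hU
  have hU22 : ContDiff ℝ (⊤ : ℕ∞) (pd2 (pd2 U)) := pd2_contDiff hU2
  have hdU : Differentiable ℝ U := hU.differentiable (by simp)
  have hdU1 : Differentiable ℝ (pd1 U) := hU1.differentiable (by simp)
  have hdU22 : Differentiable ℝ (pd2 (pd2 U)) := hU22.differentiable (by simp)
  have hfun : pd1 (pd1 U)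
      = fun q : ℝ × ℝ => μ * U q - U q + 1/2 * (q.1 * pd1 U q) - 1/2 * pd2 (pd2 U) q :=
    funext h
  have h1 : HasFDerivAt U (fderiv ℝ U p) p := (hdU p).hasFDerivAt
  have h2 : HasFDerivAt (pd1 U) (fderiv ℝ (pd1 U) p) p := (hdU1 p).hasFDerivAt
  have h3 : HasFDerivAt (pd2 (pd2 U)) (fderiv ℝ (pd2 (pd2 U)) p) p := (hdU22 p).hasFDerivAt
  have hfst : HasFDerivAt (fun q : ℝ × ℝ => q.1) (ContinuousLinearMap.fst ℝ ℝ ℝ) p :=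
    hasFDerivAt_fst
  have H : HasFDerivAt
      (fun q : ℝ × ℝ => μ * U q - U q + 1/2 * (q.1 * pd1 U q) - 1/2 * pd2 (pd2 U) q)
      (((μ • fderiv ℝ U p - fderiv ℝ U p)
        + (1/2 : ℝ) • (p.1 • fderiv ℝ (pd1 U) p + (pd1 U p) • ContinuousLinearMap.fst ℝ ℝ ℝ))
        - (1/2 : ℝ) • fderiv ℝ (pd2 (pd2 U)) p) p :=
    (((h1.const_mul μ).sub h1).add ((hfst.mul h2).const_mul (1/2))).sub (h3.const_mul (1/2))
  have e1 : pd1 (pd1 (pd1 U)) p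
      = fderiv ℝ (fun q : ℝ × ℝ => μ * U q - U q + 1/2 * (q.1 * pd1 U q)
          - 1/2 * pd2 (pd2 U) q) p (1, 0) := by
    show fderiv ℝ (pd1 (pd1 U)) p (1, 0) = _
    rw [hfun]
  have swap1 : pd1 (pd2 (pd2 U)) p = pd2 (pd2 (pd1 U)) p := by
    have ha : pd1 (pd2 U) = pd2 (pd1 U) := funext (pd_swap hU)
    calc pd1 (pd2 (pd2 U)) p = pd2 (pd1 (pd2 U)) p := pd_swap hU2 p
      _ = pd2 (pd2 (pd1 U)) p := by rw [ha]
  rw [e1, H.fderiv]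
  have : fderiv ℝ (pd2 (pd2 U)) p (1, 0) = pd2 (pd2 (pd1 U)) p := swap1
  simp only [ContinuousLinearMap.coe_sub', ContinuousLinearMap.coe_add', Pi.sub_apply,
    Pi.add_apply, ContinuousLinearMap.coe_smul', Pi.smul_apply, smul_eq_mul,
    ContinuousLinearMap.coe_fst']
  rw [this]
  show μ * pd1 U p - pd1 U p + 1/2 * (p.1 * pd1 (pd1 U) p + pd1 U p * 1)
      - 1/2 * pd2 (pd2 (pd1 U)) p = _
  ring

lemma OU_pd {u : ℝ → ℝ → ℝ} (hu : ContDiff ℝ (⊤ : ℕ∞) (fun p : ℝ × ℝ => u p.1 p.2)) (y ϑ : ℝ) :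
    OU u y ϑ = pd1 (pd1 (fun p : ℝ × ℝ => u p.1 p.2)) (y, ϑ)
      - y / 2 * pd1 (fun p : ℝ × ℝ => u p.1 p.2) (y, ϑ)
      + 1 / 2 * pd2 (pd2 (fun p : ℝ × ℝ => u p.1 p.2)) (y, ϑ) + u y ϑ := by
  set U : ℝ × ℝ → ℝ := fun p => u p.1 p.2 with hUdef
  have hdU : Differentiable ℝ U := hu.differentiable (by simp)
  have hdU1 : Differentiable ℝ (pd1 U) := (pd1_contDiff hu).differentiable (by simp)
  have hdU2 : Differentiable ℝ (pd2 U) := (pd2_contDiff hu).differentiable (by simp)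
  have h1 : deriv (fun s => u s ϑ) = fun s => pd1 U (s, ϑ) :=
    funext fun s => deriv_sect1 hdU s ϑ
  have h2 : deriv (fun t => u y t) = fun t => pd2 U (y, t) :=
    funext fun t => deriv_sect2 hdU y t
  unfold OU
  rw [h1, h2, deriv_sect1 hdU1 y ϑ, deriv_sect2 hdU2 y ϑ]

lemma ball_subset_Icc (x₀ : ℝ) : Metric.ball x₀ 1 ⊆ Set.Icc (x₀ - 1) (x₀ + 1) := by
  intro x hx
  rw [Metric.mem_ball, Real.dist_eq, abs_sub_lt_iff] at hx
  exact ⟨by linarith [hx.1, hx.2], by linarith [hx.1, hx.2]⟩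

lemma hasDerivAt_param_integral {F F' : ℝ → ℝ → ℝ} (a b : ℝ)
    (hF : Continuous fun p : ℝ × ℝ => F p.1 p.2)
    (hF' : Continuous fun p : ℝ × ℝ => F' p.1 p.2)
    (hd : ∀ x t, HasDerivAt (fun x' => F x' t) (F' x t) x) (x₀ : ℝ) :
    HasDerivAt (fun x => ∫ t in a..b, F x t) (∫ t in a..b, F' x₀ t) x₀ := by
  obtain ⟨M, hM⟩ := ((isCompact_Icc (a := x₀ - 1) (b := x₀ + 1)).prod
    (isCompact_uIcc (a := a) (b := b))).exists_bound_of_continuousOn hF'.continuousOn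
  refine (intervalIntegral.hasDerivAt_integral_of_dominated_loc_of_deriv_le
    (F := F) (F' := F') (bound := fun _ => M) (Metric.ball_mem_nhds x₀ zero_lt_one) ?_ ?_ ?_ ?_ ?_ ?_).2
  · exact Filter.Eventually.of_forall fun x =>
      (hF.comp (Continuous.prodMk_right x)).aestronglyMeasurable
  · exact (hF.comp (Continuous.prodMk_right x₀)).intervalIntegrable _ _
  · exact (hF'.comp (Continuous.prodMk_right x₀)).aestronglyMeasurable
  · refine Filter.Eventually.of_forall fun t ht x hx => ?_
    exact hM (x, t) ⟨ball_subset_Icc x₀ hx, Set.Ioc_subset_Icc_self ht⟩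
  · exact intervalIntegrable_const
  · exact Filter.Eventually.of_forall fun t _ x _ => hd x t

lemma pd1_periodic {f : ℝ × ℝ → ℝ} {c : ℝ} (hf : Differentiable ℝ f)
    (h : ∀ s t, f (s, t + c) = f (s, t)) (s t : ℝ) : pd1 f (s, t + c) = pd1 f (s, t) := by
  rw [← deriv_sect1 hf s (t + c), ← deriv_sect1 hf s t]
  congr 1
  funext s'
  exact h s' t

lemma pd2_periodic {f : ℝ × ℝ → ℝ} {c : ℝ} (hf : Differentiable ℝ f)
    (h : ∀ s t, f (s, t + c) = f (s, t)) (s t : ℝ) : pd2 f (s, t + c) = pd2 f (s, t) := by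
  rw [← deriv_sect2 hf s (t + c), ← deriv_sect2 hf s t]
  calc deriv (fun t' => f (s, t')) (t + c) = deriv (fun t' => f (s, t' + c)) t :=
        (deriv_comp_add_const (f := fun w => f (s, w)) (a := c) (x := t)).symm
    _ = deriv (fun t' => f (s, t')) t := by
        rw [show (fun t' => f (s, t' + c)) = fun t' => f (s, t') from funext fun t' => h s t']

lemma growH {q G : ℝ → ℝ} {β ε : ℝ} (hε : 0 < ε)
    (hq : ∀ y, HasDerivAt q (G y) y) (hqnn : ∀ y, 0 ≤ q y)
    (hG : ∀ y, β ≤ y → 2 * ε * Real.exp (y ^ 2 / 4) ≤ G y)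
    (hint : IntegrableOn (fun y => Real.exp (-(y ^ 2) / 4) * q y) (Set.Ioi β)) : False := by
  set A : ℝ → ℝ := fun y => ∫ s in β..y, Real.exp (s ^ 2 / 4) with hAdef
  have hcont : Continuous fun s : ℝ => Real.exp (s ^ 2 / 4) := by continuity
  have hA : ∀ y, HasDerivAt A (Real.exp (y ^ 2 / 4)) y := fun y =>
    intervalIntegral.integral_hasDerivAt_right (hcont.intervalIntegrable _ _)
      (hcont.stronglyMeasurableAtFilter _ _) hcont.continuousAt
  have hAβ : A β = 0 := intervalIntegral.integral_same
  have hexp2 : ∀ s : ℝ, HasDerivAt (fun s : ℝ => Real.exp (s ^ 2 / 4))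
      (Real.exp (s ^ 2 / 4) * (s / 2)) s := by
    intro s
    have h0 : HasDerivAt (fun s : ℝ => s ^ 2 / 4) (s / 2) s := by
      have := (hasDerivAt_pow 2 s).div_const 4
      exact this.congr_deriv (by norm_num; ring)
    exact h0.exp
  have hstep1 : ∀ y, β ≤ y → 2 * ε * A y ≤ q y := by
    intro y hy
    have hKd : ∀ z, HasDerivAt (fun z => q z - 2 * ε * A z) (G z - 2 * ε * Real.exp (z ^ 2 / 4)) z :=
      fun z => (hq z).sub ((hA z).const_mul (2 * ε))
    have hK : MonotoneOn (fun z => q z - 2 * ε * A z) (Set.Ici β) := by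
      apply monotoneOn_of_deriv_nonneg (convex_Ici β)
      · exact (Differentiable.continuous fun z => (hKd z).differentiableAt).continuousOn
      · exact fun z _ => (hKd z).differentiableAt.differentiableWithinAt
      · intro z hz
        rw [interior_Ici] at hz
        rw [(hKd z).deriv]
        have := hG z hz.le
        linarith
    have h0 := hK Set.self_mem_Ici hy hy
    have := hqnn β
    simp only [hAβ, mul_zero, sub_zero] at h0
    linarith
  have hstep2 : ∀ y, β ≤ y → Real.exp (y ^ 2 / 4) - Real.exp (β ^ 2 / 4) ≤ y / 2 * A y := by
    intro y hy
    have hφd : ∀ s, HasDerivAt (fun s => y / 2 * A s - Real.exp (s ^ 2 / 4))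
        (y / 2 * Real.exp (s ^ 2 / 4) - Real.exp (s ^ 2 / 4) * (s / 2)) s :=
      fun s => ((hA s).const_mul (y / 2)).sub (hexp2 s)
    have hφ : MonotoneOn (fun s => y / 2 * A s - Real.exp (s ^ 2 / 4)) (Set.Icc β y) := by
      apply monotoneOn_of_deriv_nonneg (convex_Icc β y)
      · exact (Differentiable.continuous fun z => (hφd z).differentiableAt).continuousOn
      · exact fun z _ => (hφd z).differentiableAt.differentiableWithinAt
      · intro s hs
        rw [interior_Icc] at hs
        rw [(hφd s).deriv]
        nlinarith [Real.exp_pos (s ^ 2 / 4), hs.1, hs.2]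
    have h0 := hφ ⟨le_rfl, hy⟩ ⟨hy, le_rfl⟩ hy
    simp only [hAβ, mul_zero, zero_sub] at h0
    linarith
  set y₁ : ℝ := |β| + 4 with hy₁def
  have hy₁β : β ≤ y₁ := le_trans (le_abs_self β) (by simp [hy₁def])
  have hy₁pos : 0 < y₁ := by
    have := abs_nonneg β
    simp only [hy₁def]
    linarith
  have hstep3 : ∀ y, y₁ ≤ y → 2 * ε * y⁻¹ ≤ Real.exp (-(y ^ 2) / 4) * q y := by
    intro y hy
    have hyβ : β ≤ y := le_trans hy₁β hy
    have hypos : 0 < y := lt_of_lt_of_le hy₁pos hy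
    have hexpβ : Real.exp (β ^ 2 / 4) ≤ Real.exp (y ^ 2 / 4) / 2 := by
      have e2 : (2 : ℝ) ≤ Real.exp ((y ^ 2 - β ^ 2) / 4) := by
        have h4 : (4 : ℝ) ≤ (y ^ 2 - β ^ 2) / 4 := by
          have h5 : |β| + 4 ≤ y := by rw [hy₁def] at hy; exact hy
          nlinarith [abs_nonneg β, sq_abs β]
        have h6 := Real.add_one_le_exp (4 : ℝ)
        have h7 := Real.exp_le_exp.2 h4
        linarith
      have e1 : Real.exp (β ^ 2 / 4) * Real.exp ((y ^ 2 - β ^ 2) / 4) = Real.exp (y ^ 2 / 4) := by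
        rw [← Real.exp_add]
        ring_nf
      nlinarith [Real.exp_pos (β ^ 2 / 4)]
    have hA2 : Real.exp (y ^ 2 / 4) / 2 ≤ y / 2 * A y := by
      have := hstep2 y hyβ
      linarith
    have hAy : Real.exp (y ^ 2 / 4) / y ≤ A y := by
      rw [div_le_iff₀ hypos]
      nlinarith
    have hq1 : 2 * ε * A y ≤ q y := hstep1 y hyβ
    have hEneg : Real.exp (-(y ^ 2) / 4) * Real.exp (y ^ 2 / 4) = 1 := by
      rw [← Real.exp_add]
      ring_nf
      exact Real.exp_zero
    have hEpos := Real.exp_pos (-(y ^ 2) / 4)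
    calc 2 * ε * y⁻¹ = 2 * ε * (Real.exp (-(y ^ 2) / 4) * Real.exp (y ^ 2 / 4)) * y⁻¹ := by
          rw [hEneg]; ring
      _ = Real.exp (-(y ^ 2) / 4) * (2 * ε * (Real.exp (y ^ 2 / 4) / y)) := by
          rw [div_eq_mul_inv]; ring
      _ ≤ Real.exp (-(y ^ 2) / 4) * (2 * ε * A y) := by
          have : 2 * ε * (Real.exp (y ^ 2 / 4) / y) ≤ 2 * ε * A y :=
            mul_le_mul_of_nonneg_left hAy (by positivity)
          exact mul_le_mul_of_nonneg_left this hEpos.le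
      _ ≤ Real.exp (-(y ^ 2) / 4) * q y := mul_le_mul_of_nonneg_left hq1 hEpos.le
  have hint1 : IntegrableOn (fun y => Real.exp (-(y ^ 2) / 4) * q y) (Set.Ioi y₁) :=
    hint.mono_set (Set.Ioi_subset_Ioi hy₁β)
  have hint2 : IntegrableOn (fun y => 2 * ε * y⁻¹) (Set.Ioi y₁) := by
    apply Integrable.mono' hint1 ((measurable_const.mul measurable_inv).aestronglyMeasurable)
    filter_upwards [ae_restrict_mem measurableSet_Ioi] with y hy
    have hypos : 0 < y := lt_trans hy₁pos hy
    show ‖2 * ε * y⁻¹‖ ≤ _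
    rw [Real.norm_eq_abs, abs_of_nonneg (show (0:ℝ) ≤ 2 * ε * y⁻¹ from mul_nonneg (by linarith) (inv_nonneg.2 hypos.le))]
    exact hstep3 y hy.le
  have hint3 : IntegrableOn (fun y : ℝ => y⁻¹) (Set.Ioi y₁) := by
    have heq : (fun y : ℝ => y⁻¹) = fun y => (1 / (2 * ε)) * (2 * ε * y⁻¹) := by
      funext y
      field_simp
    rw [heq]
    exact hint2.const_mul _
  have hnot : ¬ IntegrableOn (fun y : ℝ => y⁻¹) (Set.Ioi y₁) := by
    intro hcon
    have h1 : IntegrableOn (fun y : ℝ => y ^ (-1 : ℝ)) (Set.Ioi y₁) := by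
      apply hcon.congr_fun (fun y _ => (Real.rpow_neg_one y).symm) measurableSet_Ioi
    rw [integrableOn_Ioi_rpow_iff hy₁pos] at h1
    linarith
  exact hnot hint3


set_option maxHeartbeats 1000000 in
lemma keyB {v : ℝ → ℝ → ℝ} {μ : ℝ} (hμ : 1 ≤ μ)
    (hv : ContDiff ℝ (⊤ : ℕ∞) (fun p : ℝ × ℝ => v p.1 p.2))
    (hper : ∀ y : ℝ, Function.Periodic (v y) (2 * π))
    (hL2 : gaussL2 v)
    (heig : ∀ p : ℝ × ℝ, pd1 (pd1 (fun p : ℝ × ℝ => v p.1 p.2)) p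
      = μ * v p.1 p.2 - v p.1 p.2 + 1 / 2 * (p.1 * pd1 (fun p : ℝ × ℝ => v p.1 p.2) p)
        - 1 / 2 * pd2 (pd2 (fun p : ℝ × ℝ => v p.1 p.2)) p) :
    ∀ p : ℝ × ℝ, pd1 (fun p : ℝ × ℝ => v p.1 p.2) p = 0
      ∧ pd2 (fun p : ℝ × ℝ => v p.1 p.2) p = 0
      ∧ (μ - 1) * v p.1 p.2 ^ 2 = 0 := by
  set Vu : ℝ × ℝ → ℝ := fun p => v p.1 p.2 with hVudef
  have heig' : ∀ p : ℝ × ℝ, pd1 (pd1 Vu) p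
      = μ * Vu p - Vu p + 1 / 2 * (p.1 * pd1 Vu p) - 1 / 2 * pd2 (pd2 Vu) p := heig
  have hVd : Differentiable ℝ Vu := hv.differentiable (by simp)
  have hc1 : ContDiff ℝ (⊤ : ℕ∞) (pd1 Vu) := pd1_contDiff hv
  have hc2 : ContDiff ℝ (⊤ : ℕ∞) (pd2 Vu) := pd2_contDiff hv
  have hc11 : ContDiff ℝ (⊤ : ℕ∞) (pd1 (pd1 Vu)) := pd1_contDiff hc1
  have hc22 : ContDiff ℝ (⊤ : ℕ∞) (pd2 (pd2 Vu)) := pd2_contDiff hc2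
  have hVc : Continuous Vu := hv.continuous
  have hC1 : Continuous (pd1 Vu) := hc1.continuous
  have hC2 : Continuous (pd2 Vu) := hc2.continuous
  have hC11 : Continuous (pd1 (pd1 Vu)) := hc11.continuous
  have hC22 : Continuous (pd2 (pd2 Vu)) := hc22.continuous
  have hpV : ∀ s t, Vu (s, t + 2 * π) = Vu (s, t) := fun s t => hper s t
  have hpV1 : ∀ s t, pd1 Vu (s, t + 2 * π) = pd1 Vu (s, t) := pd1_periodic hVd hpV
  have hpV2 : ∀ s t, pd2 Vu (s, t + 2 * π) = pd2 Vu (s, t) := pd2_periodic hVd hpV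
  set W : ℝ × ℝ → ℝ :=
    fun p => (pd1 Vu p) ^ 2 + 1 / 2 * (pd2 Vu p) ^ 2 + (μ - 1) * (Vu p) ^ 2 with hWdef
  have hWc : Continuous W :=
    ((hC1.pow 2).add (continuous_const.mul (hC2.pow 2))).add
      (continuous_const.mul (hVc.pow 2))
  have hWnn : ∀ p, 0 ≤ W p := by
    intro p
    have h1 : 0 ≤ (μ - 1) * (Vu p) ^ 2 := mul_nonneg (by linarith) (sq_nonneg _)
    have h2 : 0 ≤ 1 / 2 * (pd2 Vu p) ^ 2 := by positivity
    have h3 := sq_nonneg (pd1 Vu p)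
    simp only [hWdef]
    linarith
  have hpW : ∀ s t, W (s, t + 2 * π) = W (s, t) := by
    intro s t
    simp only [hWdef, hpV s t, hpV1 s t, hpV2 s t]
  suffices hW0 : ∀ p, W p = 0 by
    intro p
    have h := hW0 p
    have h1 := sq_nonneg (pd1 Vu p)
    have h2 := sq_nonneg (pd2 Vu p)
    have h3 : 0 ≤ (μ - 1) * (Vu p) ^ 2 := mul_nonneg (by linarith) (sq_nonneg _)
    simp only [hWdef] at h
    refine ⟨?_, ?_, by linarith⟩
    · have h4 : (pd1 Vu p) ^ 2 = 0 := by linarith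
      exact pow_eq_zero_iff (by norm_num) |>.1 h4
    · have h4 : (pd2 Vu p) ^ 2 = 0 := by linarith
      exact pow_eq_zero_iff (by norm_num) |>.1 h4
  by_contra hcon
  push_neg at hcon
  obtain ⟨p₀, hp₀⟩ := hcon
  obtain ⟨y₀, t₀⟩ := p₀
  have hp₀pos : 0 < W (y₀, t₀) := lt_of_le_of_ne (hWnn (y₀, t₀)) (Ne.symm hp₀)
  have hπ : 0 < 2 * π := by positivity
  set q : ℝ → ℝ := fun y => ∫ t in (0 : ℝ)..(2 * π), (Vu (y, t)) ^ 2 with hqdef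
  set G : ℝ → ℝ := fun y => ∫ t in (0 : ℝ)..(2 * π), Vu (y, t) * pd1 Vu (y, t) with hGdef
  set P : ℝ → ℝ := fun y => ∫ t in (0 : ℝ)..(2 * π), W (y, t) with hPdef
  set H : ℝ → ℝ := fun y => Real.exp (-(y ^ 2) / 4) * G y with hHdef
  have hqnn : ∀ y, 0 ≤ q y := fun y =>
    intervalIntegral.integral_nonneg hπ.le fun t _ => sq_nonneg _
  have hPnn : ∀ y, 0 ≤ P y := fun y =>
    intervalIntegral.integral_nonneg hπ.le fun t _ => hWnn (y, t)
  -- derivative of q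
  have hqd : ∀ y, HasDerivAt q (2 * G y) y := by
    intro y
    have hd : ∀ x t, HasDerivAt (fun x' => (Vu (x', t)) ^ 2)
        (2 * (Vu (x, t) * pd1 Vu (x, t))) x := by
      intro x t
      have h := (hasDerivAt_sect1 hVd x t).pow 2
      refine h.congr_deriv ?_
      push_cast
      try ring
    have h0 := hasDerivAt_param_integral (F := fun x t => (Vu (x, t)) ^ 2)
      (F' := fun x t => 2 * (Vu (x, t) * pd1 Vu (x, t))) 0 (2 * π)
      (hVc.pow 2) (continuous_const.mul (hVc.mul hC1)) hd y
    rw [intervalIntegral.integral_const_mul] at h0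
    exact h0
  -- integration by parts in the angular variable
  have hibp : ∀ y, (∫ t in (0 : ℝ)..(2 * π),
      (pd2 Vu (y, t) * pd2 Vu (y, t) + Vu (y, t) * pd2 (pd2 Vu) (y, t))) = 0 := by
    intro y
    have hft : ∀ t ∈ Set.uIcc (0 : ℝ) (2 * π),
        HasDerivAt (fun t' => Vu (y, t') * pd2 Vu (y, t'))
          (pd2 Vu (y, t) * pd2 Vu (y, t) + Vu (y, t) * pd2 (pd2 Vu) (y, t)) t := by
      intro t _
      exact (hasDerivAt_sect2 hVd y t).mul (hasDerivAt_sect2 (hc2.differentiable (by simp)) y t)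
    have hcontI : Continuous fun t =>
        pd2 Vu (y, t) * pd2 Vu (y, t) + Vu (y, t) * pd2 (pd2 Vu) (y, t) :=
      (((hC2.comp (Continuous.prodMk_right y)).mul (hC2.comp (Continuous.prodMk_right y))).add
        ((hVc.comp (Continuous.prodMk_right y)).mul (hC22.comp (Continuous.prodMk_right y))))
    rw [intervalIntegral.integral_eq_sub_of_hasDerivAt hft (hcontI.intervalIntegrable _ _)]
    have e1 : Vu (y, 2 * π) = Vu (y, 0) := by
      have := hpV y 0
      rwa [zero_add] at this
    have e2 : pd2 Vu (y, 2 * π) = pd2 Vu (y, 0) := by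
      have := hpV2 y 0
      rwa [zero_add] at this
    rw [e1, e2]
    ring
  -- derivative of G
  have hGd : ∀ y, HasDerivAt G (P y + y / 2 * G y) y := by
    intro y
    have hd : ∀ x t, HasDerivAt (fun x' => Vu (x', t) * pd1 Vu (x', t))
        (pd1 Vu (x, t) * pd1 Vu (x, t) + Vu (x, t) * pd1 (pd1 Vu) (x, t)) x := fun x t =>
      (hasDerivAt_sect1 hVd x t).mul (hasDerivAt_sect1 (hc1.differentiable (by simp)) x t)
    have h0 := hasDerivAt_param_integral (F := fun x t => Vu (x, t) * pd1 Vu (x, t))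
      (F' := fun x t => pd1 Vu (x, t) * pd1 Vu (x, t) + Vu (x, t) * pd1 (pd1 Vu) (x, t))
      0 (2 * π) (hVc.mul hC1) ((hC1.mul hC1).add (hVc.mul hC11)) hd y
    have hsplit : (∫ t in (0 : ℝ)..(2 * π),
        (pd1 Vu (y, t) * pd1 Vu (y, t) + Vu (y, t) * pd1 (pd1 Vu) (y, t)))
        = P y + y / 2 * G y := by
      have hE : (fun t => pd1 Vu (y, t) * pd1 Vu (y, t) + Vu (y, t) * pd1 (pd1 Vu) (y, t))
          = fun t => (W (y, t) + y / 2 * (Vu (y, t) * pd1 Vu (y, t)))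
            + (-(1 / 2)) * (pd2 Vu (y, t) * pd2 Vu (y, t)
              + Vu (y, t) * pd2 (pd2 Vu) (y, t)) := by
        funext t
        have h := heig' (y, t)
        simp only [hWdef]
        rw [h]
        ring
      have hi1 : IntervalIntegrable
          (fun t => W (y, t) + y / 2 * (Vu (y, t) * pd1 Vu (y, t))) volume 0 (2 * π) :=
        (((hWc.comp (Continuous.prodMk_right y))).add
          (continuous_const.mul ((hVc.comp (Continuous.prodMk_right y)).mul
            (hC1.comp (Continuous.prodMk_right y))))).intervalIntegrable _ _
      have hi2 : IntervalIntegrable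
          (fun t => (-(1 / 2)) * (pd2 Vu (y, t) * pd2 Vu (y, t)
            + Vu (y, t) * pd2 (pd2 Vu) (y, t))) volume 0 (2 * π) :=
        (continuous_const.mul (((hC2.comp (Continuous.prodMk_right y)).mul
          (hC2.comp (Continuous.prodMk_right y))).add
          ((hVc.comp (Continuous.prodMk_right y)).mul
            (hC22.comp (Continuous.prodMk_right y))))).intervalIntegrable _ _
      have hiW : IntervalIntegrable (fun t => W (y, t)) volume 0 (2 * π) :=
        (hWc.comp (Continuous.prodMk_right y)).intervalIntegrable _ _
      have hiG : IntervalIntegrable (fun t => y / 2 * (Vu (y, t) * pd1 Vu (y, t)))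
          volume 0 (2 * π) :=
        (continuous_const.mul ((hVc.comp (Continuous.prodMk_right y)).mul
          (hC1.comp (Continuous.prodMk_right y)))).intervalIntegrable _ _
      rw [hE, intervalIntegral.integral_add hi1 hi2,
        intervalIntegral.integral_add hiW hiG,
        intervalIntegral.integral_const_mul, intervalIntegral.integral_const_mul, hibp y]
      ring
    rw [hsplit] at h0
    exact h0
  -- H = weight * G and its derivative
  have hHd : ∀ y, HasDerivAt H (Real.exp (-(y ^ 2) / 4) * P y) y := by
    intro y
    have h0 : HasDerivAt (fun x : ℝ => -(x ^ 2) / 4) (-(y / 2)) y := by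
      have := ((hasDerivAt_pow 2 y).neg).div_const 4
      refine this.congr_deriv ?_
      push_cast
      ring
    have hexp := h0.exp
    have h1 := hexp.mul (hGd y)
    refine h1.congr_deriv ?_
    ring
  have hHmono : Monotone H := by
    apply monotone_of_deriv_nonneg (fun y => (hHd y).differentiableAt)
    intro y
    rw [(hHd y).deriv]
    exact mul_nonneg (Real.exp_pos _).le (hPnn y)
  have hHG : ∀ y, G y = H y * Real.exp (y ^ 2 / 4) := by
    intro y
    have hone : Real.exp (-(y ^ 2) / 4) * Real.exp (y ^ 2 / 4) = 1 := by
      rw [← Real.exp_add]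
      ring_nf
      exact Real.exp_zero
    calc G y = 1 * G y := (one_mul _).symm
      _ = (Real.exp (-(y ^ 2) / 4) * Real.exp (y ^ 2 / 4)) * G y := by rw [hone]
      _ = (Real.exp (-(y ^ 2) / 4) * G y) * Real.exp (y ^ 2 / 4) := by ring
      _ = H y * Real.exp (y ^ 2 / 4) := by rw [hHdef]
  -- global integrability of the weighted mass
  have hm : Integrable (fun y => Real.exp (-(y ^ 2) / 4) * q y) := by
    have h1 : IntegrableOn (fun p : ℝ × ℝ => (Vu p) ^ 2 * Real.exp (-(p.1 ^ 2) / 4))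
        (Set.univ ×ˢ Set.Icc 0 (2 * π)) := hL2
    rw [IntegrableOn, Measure.volume_eq_prod, ← Measure.prod_restrict,
      Measure.restrict_univ] at h1
    have h2 := h1.integral_prod_left
    have hqIcc : ∀ x, q x = ∫ t in Set.Icc (0 : ℝ) (2 * π), (Vu (x, t)) ^ 2 := by
      intro x
      show (∫ t in (0 : ℝ)..(2 * π), (Vu (x, t)) ^ 2) = _
      rw [intervalIntegral.integral_of_le hπ.le, integral_Icc_eq_integral_Ioc]
    refine h2.congr (Filter.Eventually.of_forall fun x => ?_)
    show (∫ t in Set.Icc (0 : ℝ) (2 * π), (Vu (x, t)) ^ 2 * Real.exp (-(x ^ 2) / 4))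
        = Real.exp (-(x ^ 2) / 4) * q x
    rw [MeasureTheory.integral_mul_const, hqIcc x, mul_comm]
  -- find an interior point of positivity
  obtain ⟨t₁, ht₁0, ht₁2π, ht₁pos⟩ : ∃ t₁, 0 < t₁ ∧ t₁ < 2 * π ∧ 0 < W (y₀, t₁) := by
    have hWper : Function.Periodic (fun t => W (y₀, t)) (2 * π) := fun t => hpW y₀ t
    have ht₂W : W (y₀, t₀ - ⌊t₀ / (2 * π)⌋ * (2 * π)) = W (y₀, t₀) :=
      hWper.sub_int_mul_eq ⌊t₀ / (2 * π)⌋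
    have ht₂0 : 0 ≤ t₀ - ⌊t₀ / (2 * π)⌋ * (2 * π) := Int.sub_floor_div_mul_nonneg t₀ hπ
    have ht₂lt : t₀ - ⌊t₀ / (2 * π)⌋ * (2 * π) < 2 * π := Int.sub_floor_div_mul_lt t₀ hπ
    rcases eq_or_lt_of_le ht₂0 with heq | hlt
    · have hW0 : 0 < W (y₀, 0) := by
        rw [← heq] at ht₂W
        rw [ht₂W]
        exact hp₀pos
      have hco : Continuous fun t => W (y₀, t) := hWc.comp (Continuous.prodMk_right y₀)
      have hop : IsOpen {t : ℝ | 0 < W (y₀, t)} := isOpen_lt continuous_const hco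
      obtain ⟨ε, hεpos, hball⟩ := Metric.isOpen_iff.1 hop 0 hW0
      refine ⟨min (ε / 2) 1, by positivity, ?_, ?_⟩
      · have h1 : min (ε / 2) 1 ≤ 1 := min_le_right _ _
        nlinarith [Real.pi_gt_three]
      · apply hball
        rw [Metric.mem_ball, Real.dist_eq, sub_zero, abs_of_nonneg (by positivity)]
        calc min (ε / 2) 1 ≤ ε / 2 := min_le_left _ _
          _ < ε := by linarith
    · exact ⟨_, hlt, ht₂lt, by rw [ht₂W]; exact hp₀pos⟩
  -- a box of positivity
  set w : ℝ := W (y₀, t₁) / 2 with hwdef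
  have hwpos : 0 < w := by
    rw [hwdef]
    exact half_pos ht₁pos
  have hop : IsOpen {p : ℝ × ℝ | w < W p} := isOpen_lt continuous_const hWc
  obtain ⟨r, hrpos, hball⟩ := Metric.isOpen_iff.1 hop (y₀, t₁)
    (by simp only [Set.mem_setOf_eq]; rw [hwdef]; exact half_lt_self ht₁pos)
  set r' : ℝ := min (r / 2) (min (t₁ / 2) ((2 * π - t₁) / 2)) with hr'def
  have hr'pos : 0 < r' :=
    lt_min (by linarith) (lt_min (by linarith) (by linarith))
  have hr'r : r' ≤ r / 2 := min_le_left _ _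
  have hr't₁ : r' ≤ t₁ / 2 := (min_le_right _ _).trans (min_le_left _ _)
  have hr'2π : r' ≤ (2 * π - t₁) / 2 := (min_le_right _ _).trans (min_le_right _ _)
  have hbox : ∀ z t, |z - y₀| ≤ r' → |t - t₁| ≤ r' → w ≤ W (z, t) := by
    intro z t hz ht
    have hmem : (z, t) ∈ Metric.ball (y₀, t₁) r := by
      rw [Metric.mem_ball, Prod.dist_eq, Real.dist_eq, Real.dist_eq]
      exact max_lt (by linarith) (by linarith)
    exact (hball hmem).le
  have hPlow : ∀ z, z ∈ Set.Icc (y₀ - r') (y₀ + r') → w * (2 * r') ≤ P z := by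
    intro z hz
    have habs : |z - y₀| ≤ r' := abs_le.2 ⟨by linarith [hz.1], by linarith [hz.2]⟩
    have h1 : w * (2 * r') ≤ ∫ t in (t₁ - r')..(t₁ + r'), W (z, t) := by
      have hmono := intervalIntegral.integral_mono_on (μ := volume) (a := t₁ - r') (b := t₁ + r')
        (f := fun _ : ℝ => w) (g := fun t => W (z, t)) (by linarith)
        intervalIntegrable_const ((hWc.comp (Continuous.prodMk_right z)).intervalIntegrable _ _)
        (fun t ht => hbox z t habs (abs_le.2 ⟨by linarith [ht.1], by linarith [ht.2]⟩))
      rw [intervalIntegral.integral_const, smul_eq_mul] at hmono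
      calc w * (2 * r') = (t₁ + r' - (t₁ - r')) * w := by ring
        _ ≤ ∫ t in (t₁ - r')..(t₁ + r'), W (z, t) := hmono
    have h2 : (∫ t in (t₁ - r')..(t₁ + r'), W (z, t)) ≤ P z := by
      apply intervalIntegral.integral_mono_interval (by linarith) (by linarith) (by linarith)
        (Filter.Eventually.of_forall fun t => hWnn (z, t))
        ((hWc.comp (Continuous.prodMk_right z)).intervalIntegrable _ _)
    linarith
  set α : ℝ := y₀ - r' with hαdef
  set β : ℝ := y₀ + r' with hβdef
  set c1 : ℝ := Real.exp (-((|y₀| + r') ^ 2) / 4) * (w * (2 * r')) with hc1def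
  have hc1pos : 0 < c1 :=
    mul_pos (Real.exp_pos _) (mul_pos hwpos (by linarith))
  have hgap : H α + c1 * (2 * r') ≤ H β := by
    have hKd : ∀ y, HasDerivAt (fun y => H y - c1 * y)
        (Real.exp (-(y ^ 2) / 4) * P y - c1) y := by
      intro y
      have h2 : HasDerivAt (fun y : ℝ => c1 * y) c1 y := by
        simpa using (hasDerivAt_id y).const_mul c1
      exact (hHd y).sub h2
    have hK : MonotoneOn (fun y => H y - c1 * y) (Set.Icc α β) := by
      apply monotoneOn_of_deriv_nonneg (convex_Icc _ _)
      · exact (Differentiable.continuous fun z => (hKd z).differentiableAt).continuousOn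
      · exact fun z _ => (hKd z).differentiableAt.differentiableWithinAt
      · intro z hz
        rw [interior_Icc] at hz
        rw [(hKd z).deriv]
        have hzIcc : z ∈ Set.Icc (y₀ - r') (y₀ + r') := by
          constructor
          · have := hz.1; rw [hαdef] at this; linarith
          · have := hz.2; rw [hβdef] at this; linarith
        have hP := hPlow z hzIcc
        have h1 : |z - y₀| ≤ r' := abs_le.2 ⟨by linarith [hzIcc.1], by linarith [hzIcc.2]⟩
        have h2 : |z| ≤ |y₀| + r' := by
          calc |z| = |y₀ + (z - y₀)| := by ring_nf
            _ ≤ |y₀| + |z - y₀| := abs_add_le _ _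
            _ ≤ |y₀| + r' := by linarith
        have hz2 : z ^ 2 ≤ (|y₀| + r') ^ 2 := by
          nlinarith [sq_abs z, abs_nonneg z]
        have hexp : Real.exp (-((|y₀| + r') ^ 2) / 4) ≤ Real.exp (-(z ^ 2) / 4) :=
          Real.exp_le_exp.2 (by linarith)
        have h3 := mul_le_mul hexp hP (by positivity) (Real.exp_pos _).le
        simp only [hc1def]
        linarith
    have h0 := hK (Set.mem_Icc.2 ⟨le_rfl, by rw [hαdef, hβdef]; linarith⟩)
      (Set.mem_Icc.2 ⟨by rw [hαdef, hβdef]; linarith, le_rfl⟩)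
      (by rw [hαdef, hβdef]; linarith)
    have h5 : c1 * β - c1 * α = c1 * (2 * r') := by rw [hαdef, hβdef]; ring
    dsimp only at h0
    linarith
  have hdich : 0 < H β ∨ H α < 0 := by
    by_contra hcc
    push_neg at hcc
    obtain ⟨h1, h2⟩ := hcc
    nlinarith [mul_pos hc1pos (show (0 : ℝ) < 2 * r' by linarith)]
  rcases hdich with hcase | hcase
  · refine growH (q := q) (G := fun y => 2 * G y) (β := β) (ε := H β / 2)
      (by linarith) hqd hqnn ?_ hm.integrableOn
    intro y hy
    have h1 : H β ≤ H y := hHmono hy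
    have h2 : (0 : ℝ) < Real.exp (y ^ 2 / 4) := Real.exp_pos _
    have h3 : H β * Real.exp (y ^ 2 / 4) ≤ G y := by
      rw [hHG y]
      exact mul_le_mul_of_nonneg_right h1 h2.le
    have h4 : 0 < H β * Real.exp (y ^ 2 / 4) := mul_pos hcase h2
    calc 2 * (H β / 2) * Real.exp (y ^ 2 / 4) = H β * Real.exp (y ^ 2 / 4) := by ring
      _ ≤ G y := h3
      _ ≤ 2 * G y := by linarith
  · have hqdneg : ∀ y, HasDerivAt (fun y => q (-y)) (2 * G (-y) * (-1)) y := fun y =>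
      (hqd (-y)).comp y (hasDerivAt_neg y)
    have hmneg : Integrable (fun y => Real.exp (-(y ^ 2) / 4) * q (-y)) := by
      have hiff := (Measure.measurePreserving_neg (volume : Measure ℝ)).integrable_comp_emb
        (MeasurableEquiv.neg ℝ).measurableEmbedding
        (g := fun y => Real.exp (-(y ^ 2) / 4) * q y)
      have h5 : ((fun y => Real.exp (-(y ^ 2) / 4) * q y) ∘ (Neg.neg : ℝ → ℝ))
          = fun y => Real.exp (-(y ^ 2) / 4) * q (-y) := by
        funext y
        simp [Function.comp, neg_sq]
      rw [h5] at hiff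
      exact hiff.2 hm
    refine growH (q := fun y => q (-y)) (G := fun y => 2 * G (-y) * (-1)) (β := -α)
      (ε := -H α / 2) (by linarith) hqdneg (fun y => hqnn _) ?_ hmneg.integrableOn
    intro y hy
    have h1 : H (-y) ≤ H α := hHmono (by linarith : -y ≤ α)
    have h2 : (0 : ℝ) < Real.exp (y ^ 2 / 4) := Real.exp_pos _
    have h3 : G (-y) ≤ H α * Real.exp (y ^ 2 / 4) := by
      have h6 := hHG (-y)
      rw [show ((-y : ℝ) ^ 2) = y ^ 2 from neg_sq y] at h6
      rw [h6]
      exact mul_le_mul_of_nonneg_right h1 h2.le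
    have h4 : H α * Real.exp (y ^ 2 / 4) < 0 := mul_neg_of_neg_of_pos hcase h2
    calc 2 * (-H α / 2) * Real.exp (y ^ 2 / 4) = -(H α * Real.exp (y ^ 2 / 4)) := by ring
      _ ≤ -2 * (H α * Real.exp (y ^ 2 / 4)) := by linarith
      _ ≤ -2 * G (-y) := by linarith
      _ = 2 * G (-y) * (-1) := by ring

lemma deriv_contDiff_top {h : ℝ → ℝ} (hsm : ContDiff ℝ (⊤ : ℕ∞) h) : ContDiff ℝ (⊤ : ℕ∞) (deriv h) := by
  exact (contDiff_infty_iff_deriv.1 hsm).2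

lemma integral_pos_of_pos_at {f : ℝ → ℝ} {A B x₀ : ℝ} (hf : Continuous f)
    (hnn : ∀ x, 0 ≤ f x) (hA : A ≤ x₀) (hB : x₀ < B) (hpos : 0 < f x₀) :
    0 < ∫ x in A..B, f x := by
  have hop : IsOpen {x : ℝ | f x₀ / 2 < f x} := isOpen_lt continuous_const hf
  obtain ⟨ε, hε, hball⟩ := Metric.isOpen_iff.1 hop x₀
    (by simp only [Set.mem_setOf_eq]; linarith)
  set d := min (ε / 2) ((B - x₀) / 2) with hd
  have hdpos : 0 < d := lt_min (by linarith) (by linarith)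
  have hd1 : d ≤ ε / 2 := min_le_left _ _
  have hd2 : d ≤ (B - x₀) / 2 := min_le_right _ _
  have h1 : f x₀ / 2 * d ≤ ∫ x in x₀..(x₀ + d), f x := by
    have hmono := intervalIntegral.integral_mono_on (μ := volume) (a := x₀) (b := x₀ + d)
      (f := fun _ => f x₀ / 2) (g := f) (by linarith) intervalIntegrable_const
      (hf.intervalIntegrable _ _) (fun t ht => (hball (show t ∈ Metric.ball x₀ ε by
        rw [Metric.mem_ball, Real.dist_eq, abs_lt]
        exact ⟨by linarith [ht.1], by linarith [ht.2]⟩)).le)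
    rw [intervalIntegral.integral_const, smul_eq_mul] at hmono
    calc f x₀ / 2 * d = (x₀ + d - x₀) * (f x₀ / 2) := by ring
      _ ≤ _ := hmono
  have h2 : (∫ x in x₀..(x₀ + d), f x) ≤ ∫ x in A..B, f x :=
    intervalIntegral.integral_mono_interval hA (by linarith) (by linarith)
      (Filter.Eventually.of_forall hnn) (hf.intervalIntegrable _ _)
  have h3 : 0 < f x₀ / 2 * d := mul_pos (by linarith) hdpos
  linarith

lemma deriv_periodic {h : ℝ → ℝ} {c : ℝ} (hper : Function.Periodic h c) (x : ℝ) :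
    deriv h (x + c) = deriv h x := by
  calc deriv h (x + c) = deriv (fun y => h (y + c)) x := (deriv_comp_add_const h c x).symm
    _ = deriv h x := by rw [show (fun y => h (y + c)) = h from funext fun y => hper y]

lemma ode_pos {h : ℝ → ℝ} {c : ℝ} (hc : 0 < c) (hsm : ContDiff ℝ (⊤ : ℕ∞) h)
    (hper : Function.Periodic h (2 * π)) (hode : ∀ x, deriv (deriv h) x = c * h x) :
    ∀ x, h x = 0 := by
  have hπ : (0 : ℝ) < 2 * π := by positivity
  have hd : Differentiable ℝ h := hsm.differentiable (by simp)
  have hd1 : ContDiff ℝ (⊤ : ℕ∞) (deriv h) := deriv_contDiff_top hsm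
  have hdd1 : Differentiable ℝ (deriv h) := hd1.differentiable (by simp)
  have hGd : ∀ x, HasDerivAt (fun x => h x * deriv h x)
      (deriv h x * deriv h x + c * (h x * h x)) x := by
    intro x
    have h0 := (hd x).hasDerivAt.mul (hdd1 x).hasDerivAt
    refine h0.congr_deriv ?_
    rw [hode x]
    ring
  have hcont : Continuous fun x => deriv h x * deriv h x + c * (h x * h x) :=
    (hd1.continuous.mul hd1.continuous).add
      (continuous_const.mul (hsm.continuous.mul hsm.continuous))
  have hint : (∫ x in (0 : ℝ)..(2 * π), (deriv h x * deriv h x + c * (h x * h x)))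
      = h (2 * π) * deriv h (2 * π) - h 0 * deriv h 0 :=
    intervalIntegral.integral_eq_sub_of_hasDerivAt (fun x _ => hGd x)
      (hcont.intervalIntegrable _ _)
  have hh : h (2 * π) = h 0 := by have := hper 0; rwa [zero_add] at this
  have hdh : deriv h (2 * π) = deriv h 0 := by
    have := deriv_periodic hper 0; rwa [zero_add] at this
  rw [hh, hdh, sub_self] at hint
  intro x
  by_contra hx
  have hper2 : h (x - ⌊x / (2 * π)⌋ * (2 * π)) = h x := hper.sub_int_mul_eq _
  set x₂ := x - ⌊x / (2 * π)⌋ * (2 * π) with hx₂def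
  have h0' : 0 ≤ x₂ := Int.sub_floor_div_mul_nonneg x hπ
  have h2' : x₂ < 2 * π := Int.sub_floor_div_mul_lt x hπ
  have hx₂ne : h x₂ ≠ 0 := by rw [hper2]; exact hx
  have hposf : 0 < deriv h x₂ * deriv h x₂ + c * (h x₂ * h x₂) := by
    have := mul_self_pos.2 hx₂ne
    nlinarith [mul_self_nonneg (deriv h x₂)]
  have hgt := integral_pos_of_pos_at hcont
    (fun t => by nlinarith [mul_self_nonneg (deriv h t), mul_self_nonneg (h t)])
    h0' h2' hposf
  rw [hint] at hgt
  exact lt_irrefl _ hgt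

lemma ode_zero {h : ℝ → ℝ} (hsm : ContDiff ℝ (⊤ : ℕ∞) h) (hper : Function.Periodic h (2 * π))
    (hode : ∀ x, deriv (deriv h) x = 0) : ∀ x, h x = h 0 := by
  have hd : Differentiable ℝ h := hsm.differentiable (by simp)
  have hd1 : ContDiff ℝ (⊤ : ℕ∞) (deriv h) := deriv_contDiff_top hsm
  have hk : ∀ x, deriv h x = deriv h 0 := fun x =>
    is_const_of_deriv_eq_zero (hd1.differentiable (by simp)) hode x 0
  have hF : ∀ x, HasDerivAt (fun x => h x - deriv h 0 * x) 0 x := by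
    intro x
    have h0 := (hd x).hasDerivAt.sub ((hasDerivAt_id x).const_mul (deriv h 0))
    refine h0.congr_deriv ?_
    rw [hk x]
    ring
  have hconst : ∀ x, h x - deriv h 0 * x = h 0 - deriv h 0 * 0 := fun x =>
    is_const_of_deriv_eq_zero (fun y => (hF y).differentiableAt)
      (fun y => (hF y).deriv) x 0
  have hπ : (0 : ℝ) < 2 * π := by positivity
  have hk0 : deriv h 0 = 0 := by
    have h1 := hconst (2 * π)
    have h2 := hper 0
    rw [zero_add] at h2
    have h3 : deriv h 0 * (2 * π) = 0 := by linear_combination h2 - h1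
    rcases mul_eq_zero.1 h3 with h | h
    · exact h
    · exact absurd h hπ.ne'
  intro x
  have := hconst x
  rw [hk0] at this
  linarith

lemma ode_neg {h : ℝ → ℝ} {c : ℝ} (hc : c < 0) (hsm : ContDiff ℝ (⊤ : ℕ∞) h)
    (hode : ∀ x, deriv (deriv h) x = c * h x) :
    ∀ x, h x = h 0 * Real.cos (Real.sqrt (-c) * x)
      + (deriv h 0 / Real.sqrt (-c)) * Real.sin (Real.sqrt (-c) * x) := by
  set ω := Real.sqrt (-c) with hωdef
  have hωpos : 0 < ω := Real.sqrt_pos.2 (by linarith)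
  have hω2 : ω ^ 2 = -c := Real.sq_sqrt (by linarith)
  have hd : Differentiable ℝ h := hsm.differentiable (by simp)
  have hd1 : ContDiff ℝ (⊤ : ℕ∞) (deriv h) := deriv_contDiff_top hsm
  have hdd1 : Differentiable ℝ (deriv h) := hd1.differentiable (by simp)
  have hlin : ∀ x : ℝ, HasDerivAt (fun x : ℝ => ω * x) ω x := fun x => by
    simpa using (hasDerivAt_id x).const_mul ω
  have hgd : ∀ x, HasDerivAt
      (fun x => h x - h 0 * Real.cos (ω * x) - (deriv h 0 / ω) * Real.sin (ω * x))
      (deriv h x + h 0 * (ω * Real.sin (ω * x))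
        - (deriv h 0 / ω) * (ω * Real.cos (ω * x))) x := by
    intro x
    have h0 := ((hd x).hasDerivAt.sub (((hlin x).cos).const_mul (h 0))).sub
      (((hlin x).sin).const_mul (deriv h 0 / ω))
    refine h0.congr_deriv ?_
    ring
  have hg1d : ∀ x, HasDerivAt
      (fun x => deriv h x + h 0 * (ω * Real.sin (ω * x))
        - (deriv h 0 / ω) * (ω * Real.cos (ω * x)))
      (-(ω ^ 2) * (h x - h 0 * Real.cos (ω * x) - (deriv h 0 / ω) * Real.sin (ω * x))) x := by
    intro x
    have hDD : HasDerivAt (deriv h) (c * h x) x := by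
      rw [← hode x]
      exact (hdd1 x).hasDerivAt
    have h0 := (hDD.add ((((hlin x).sin).const_mul ω).const_mul (h 0))).sub
      (((((hlin x).cos).const_mul ω)).const_mul (deriv h 0 / ω))
    refine h0.congr_deriv ?_
    have hcω : c = -(ω ^ 2) := by linarith
    rw [hcω]
    ring
  set g : ℝ → ℝ := fun x => h x - h 0 * Real.cos (ω * x) - (deriv h 0 / ω) * Real.sin (ω * x)
    with hgdef
  set g1 : ℝ → ℝ := fun x => deriv h x + h 0 * (ω * Real.sin (ω * x))
    - (deriv h 0 / ω) * (ω * Real.cos (ω * x)) with hg1def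
  have hEd : ∀ x, HasDerivAt (fun x => g1 x ^ 2 + ω ^ 2 * g x ^ 2) 0 x := by
    intro x
    have h0 := ((hg1d x).pow 2).add (((hgd x).pow 2).const_mul (ω ^ 2))
    refine h0.congr_deriv ?_
    push_cast
    ring
  have hEconst : ∀ x, g1 x ^ 2 + ω ^ 2 * g x ^ 2 = g1 0 ^ 2 + ω ^ 2 * g 0 ^ 2 := fun x =>
    is_const_of_deriv_eq_zero (fun y => (hEd y).differentiableAt)
      (fun y => (hEd y).deriv) x 0
  have hg0 : g 0 = 0 := by
    rw [hgdef]
    simp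
  have hg10 : g1 0 = 0 := by
    rw [hg1def]
    simp
    field_simp
    ring
  intro x
  have hE := hEconst x
  rw [hg0, hg10] at hE
  have hgx : g x = 0 := by
    have h1 := sq_nonneg (g1 x)
    have h2 := sq_nonneg (g x)
    have h3 : 0 < ω ^ 2 := by positivity
    have h4 : g x ^ 2 = 0 := by nlinarith
    exact pow_eq_zero_iff (by norm_num) |>.1 h4
  have := hgx
  rw [hgdef] at this
  simp only at this
  linarith

lemma ode_neg_per {h : ℝ → ℝ} {c : ℝ} (hc : c < 0) (hc2 : -2 < c) (hc1 : c ≠ -1)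
    (hsm : ContDiff ℝ (⊤ : ℕ∞) h) (hper : Function.Periodic h (2 * π))
    (hode : ∀ x, deriv (deriv h) x = c * h x) : ∀ x, h x = 0 := by
  have hform := ode_neg hc hsm hode
  set ω := Real.sqrt (-c) with hωdef
  have hωpos : 0 < ω := Real.sqrt_pos.2 (by linarith)
  have hω2 : ω ^ 2 = -c := Real.sq_sqrt (by linarith)
  have hd : Differentiable ℝ h := hsm.differentiable (by simp)
  have hfun : h = fun x => h 0 * Real.cos (ω * x) + (deriv h 0 / ω) * Real.sin (ω * x) :=
    funext hform
  have hlin : ∀ x : ℝ, HasDerivAt (fun x : ℝ => ω * x) ω x := fun x => by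
    simpa using (hasDerivAt_id x).const_mul ω
  have hdform : ∀ x, deriv h x
      = -(h 0 * ω) * Real.sin (ω * x) + (deriv h 0 / ω) * ω * Real.cos (ω * x) := by
    intro x
    have h0 := (((hlin x).cos).const_mul (h 0)).add (((hlin x).sin).const_mul (deriv h 0 / ω))
    have h0' : HasDerivAt h
        (h 0 * (-Real.sin (ω * x) * ω) + deriv h 0 / ω * (Real.cos (ω * x) * ω)) x :=
      h0.congr_of_eventuallyEq (Filter.Eventually.of_forall fun y => hform y)
    have hdx : HasDerivAt h
        (-(h 0 * ω) * Real.sin (ω * x) + (deriv h 0 / ω) * ω * Real.cos (ω * x)) x := by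
      refine h0'.congr_deriv ?_
      ring
    exact hdx.deriv
  set P := h 0 with hPdef
  set Q := deriv h 0 / ω with hQdef
  have e1 : P * Real.cos (ω * (2 * π)) + Q * Real.sin (ω * (2 * π)) = P := by
    have h1 := hper 0
    rw [zero_add] at h1
    have h2 := hform (2 * π)
    have h3 := hform 0
    rw [mul_zero, Real.cos_zero, Real.sin_zero] at h3
    rw [h2, h3] at h1
    calc P * Real.cos (ω * (2 * π)) + Q * Real.sin (ω * (2 * π)) = P * 1 + Q * 0 := h1
      _ = P := by ring
  have e2' : -P * Real.sin (ω * (2 * π)) + Q * Real.cos (ω * (2 * π)) = Q := by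
    have h1 := deriv_periodic hper 0
    rw [zero_add] at h1
    rw [hdform (2 * π), hdform 0, mul_zero, Real.cos_zero, Real.sin_zero] at h1
    have h4 : ω * (-P * Real.sin (ω * (2 * π)) + Q * Real.cos (ω * (2 * π))) = ω * Q := by
      linear_combination h1
    exact mul_left_cancel₀ hωpos.ne' h4
  have hC : Real.cos (ω * (2 * π)) ≠ 1 := by
    intro hcos
    obtain ⟨n, hn⟩ := (Real.cos_eq_one_iff _).1 hcos
    have hπ : (0 : ℝ) < 2 * π := by positivity
    have hωn : (n : ℝ) = ω := mul_right_cancel₀ hπ.ne' hn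
    have hn0 : (0 : ℤ) < n := by exact_mod_cast hωn ▸ hωpos
    have hlt : (n : ℝ) ^ 2 < 2 := by rw [hωn, hω2]; linarith
    have hne1 : (n : ℝ) ≠ 1 := by
      intro h1
      apply hc1
      have hω1 : ω = 1 := by rw [← hωn, h1]
      rw [hω1] at hω2
      linarith
    have hn1 : (1 : ℤ) ≤ n := hn0
    have hn2 : (2 : ℤ) ≤ n := by
      rcases lt_or_eq_of_le hn1 with h | h
      · omega
      · exfalso; apply hne1; exact_mod_cast h.symm
    have : (2 : ℝ) ≤ (n : ℝ) := by exact_mod_cast hn2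
    nlinarith
  set C := Real.cos (ω * (2 * π)) with hCdef
  set S := Real.sin (ω * (2 * π)) with hSdef
  have hP0 : P = 0 := by
    have key : P * (S ^ 2 + (1 - C) ^ 2) = 0 := by
      linear_combination (C - 1) * e1 + (-S) * e2'
    have h1 : (1 - C) ≠ 0 := sub_ne_zero.2 (Ne.symm hC)
    have hpos : 0 < S ^ 2 + (1 - C) ^ 2 := by
      have h2 : 0 < (1 - C) ^ 2 := lt_of_le_of_ne (sq_nonneg _) (Ne.symm (pow_ne_zero 2 h1))
      linarith [sq_nonneg S]
    rcases mul_eq_zero.1 key with h | h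
    · exact h
    · linarith
  have hQ0 : Q = 0 := by
    have h1 : Q * (C - 1) = 0 := by
      rw [hP0] at e2'
      linear_combination e2'
    rcases mul_eq_zero.1 h1 with h | h
    · exact h
    · exfalso; apply hC; linarith
  intro x
  rw [hform x, hP0, hQ0]
  ring

lemma base_lemma {u : ℝ → ℝ → ℝ} {lam : ℝ}
    (hu : ContDiff ℝ (⊤ : ℕ∞) (fun p : ℝ × ℝ => u p.1 p.2))
    (heig : ∀ y ϑ : ℝ, OU u y ϑ = lam * u y ϑ) :
    ∀ p : ℝ × ℝ, pd1 (pd1 (fun p : ℝ × ℝ => u p.1 p.2)) p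
      = lam * u p.1 p.2 - u p.1 p.2
        + 1 / 2 * (p.1 * pd1 (fun p : ℝ × ℝ => u p.1 p.2) p)
        - 1 / 2 * pd2 (pd2 (fun p : ℝ × ℝ => u p.1 p.2)) p := by
  intro p
  obtain ⟨y, ϑ⟩ := p
  have h := heig y ϑ
  rw [OU_pd hu] at h
  linear_combination h

set_option maxHeartbeats 1000000 in
/-- The only unstable eigenfunctions of the Ornstein–Uhlenbeck operator are the constants
with eigenvalue `1`, and the span of `y`, `cos ϑ`, `sin ϑ` with eigenvalue `1/2`. -/
theorem OU_unstable_eigenfunctions_classification (u : ℝ → ℝ → ℝ) (lam : ℝ)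
    (hu : ContDiff ℝ (⊤ : ℕ∞) (fun p : ℝ × ℝ => u p.1 p.2))
    (hper : ∀ y : ℝ, Function.Periodic (u y) (2 * Real.pi))
    (hne : ∃ y ϑ : ℝ, u y ϑ ≠ 0)
    (hL2 : gaussL2 u)
    (hL2y : gaussL2 (fun y ϑ => deriv (fun s => u s ϑ) y))
    (hL2t : gaussL2 (fun y ϑ => deriv (fun t => u y t) ϑ))
    (hL2yy : gaussL2 (fun y ϑ => deriv (deriv (fun s => u s ϑ)) y))
    (hL2yt : gaussL2 (fun y ϑ => deriv (fun s => deriv (fun t => u s t) ϑ) y))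
    (hL2tt : gaussL2 (fun y ϑ => deriv (deriv (fun t => u y t)) ϑ))
    (hlam : 0 < lam)
    (heig : ∀ y ϑ : ℝ, OU u y ϑ = lam * u y ϑ) :
    (lam = 1 ∧ ∃ c : ℝ, c ≠ 0 ∧ ∀ y ϑ : ℝ, u y ϑ = c) ∨
    (lam = 1 / 2 ∧ ∃ a b c : ℝ, (a ≠ 0 ∨ b ≠ 0 ∨ c ≠ 0) ∧
      ∀ y ϑ : ℝ, u y ϑ = a * y + b * Real.cos ϑ + c * Real.sin ϑ) := by
  have hbase := base_lemma hu heig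
  set U : ℝ × ℝ → ℝ := fun p => u p.1 p.2 with hUdef
  have hUc : ContDiff ℝ (⊤ : ℕ∞) U := hu
  have hUd : Differentiable ℝ U := hUc.differentiable (by simp)
  have hU1 : ContDiff ℝ (⊤ : ℕ∞) (pd1 U) := pd1_contDiff hUc
  have hU11 : ContDiff ℝ (⊤ : ℕ∞) (pd1 (pd1 U)) := pd1_contDiff hU1
  have hU1d : Differentiable ℝ (pd1 U) := hU1.differentiable (by simp)
  have hU11d : Differentiable ℝ (pd1 (pd1 U)) := hU11.differentiable (by simp)
  have s1 := pdOU hUc hbase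
  have s2 := pdOU hU1 s1
  have hpU : ∀ s t, U (s, t + 2 * π) = U (s, t) := fun s t => hper s t
  have hpU1 : ∀ s t, pd1 U (s, t + 2 * π) = pd1 U (s, t) := pd1_periodic hUd hpU
  have hpU11 : ∀ s t, pd1 (pd1 U) (s, t + 2 * π) = pd1 (pd1 U) (s, t) :=
    pd1_periodic hU1d hpU1
  have hconv : (fun y ϑ => deriv (deriv (fun s => u s ϑ)) y)
      = fun y ϑ => pd1 (pd1 U) (y, ϑ) := by
    funext y ϑ
    have hfun : deriv (fun s => u s ϑ) = fun s => pd1 U (s, ϑ) :=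
      funext fun s => deriv_sect1 hUd s ϑ
    rw [hfun]
    exact deriv_sect1 hU1d y ϑ
  have hL2V : gaussL2 (fun y ϑ => pd1 (pd1 U) (y, ϑ)) := by rwa [hconv] at hL2yy
  have hres := keyB (v := fun y ϑ => pd1 (pd1 U) (y, ϑ)) (μ := lam + 1 / 2 + 1 / 2)
    (by linarith) hU11 (fun y t => hpU11 y t) hL2V s2
  have hV0 : ∀ p : ℝ × ℝ, pd1 (pd1 U) p = 0 := by
    intro p
    have h3 : (lam + 1 / 2 + 1 / 2 - 1) * (pd1 (pd1 U) p) ^ 2 = 0 := (hres p).2.2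
    have h4 : lam * (pd1 (pd1 U) p) ^ 2 = 0 := by linear_combination h3
    rcases mul_eq_zero.1 h4 with h | h
    · exact absurd h hlam.ne'
    · exact pow_eq_zero_iff (by norm_num) |>.1 h
  -- linear structure in y
  have hrep : ∀ y ϑ : ℝ, u y ϑ = u 0 ϑ + pd1 U (0, ϑ) * y := by
    intro y ϑ
    have hgd : ∀ s, HasDerivAt (fun s' => pd1 U (s', ϑ)) (pd1 (pd1 U) (s, ϑ)) s :=
      fun s => hasDerivAt_sect1 hU1d s ϑ
    have hgconst : ∀ s, pd1 U (s, ϑ) = pd1 U (0, ϑ) := fun s =>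
      is_const_of_deriv_eq_zero (fun z => (hgd z).differentiableAt)
        (fun z => by rw [(hgd z).deriv]; exact hV0 (z, ϑ)) s 0
    have hF : ∀ s, HasDerivAt (fun s' => u s' ϑ - pd1 U (0, ϑ) * s') 0 s := by
      intro s
      have h0 := (hasDerivAt_sect1 hUd s ϑ).sub ((hasDerivAt_id s).const_mul (pd1 U (0, ϑ)))
      refine h0.congr_deriv ?_
      rw [hgconst s]
      ring
    have hcst := is_const_of_deriv_eq_zero (fun z => (hF z).differentiableAt)
      (fun z => (hF z).deriv) y 0
    linear_combination hcst
  set fb : ℝ → ℝ := fun ϑ => u 0 ϑ with hfbdef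
  set fa : ℝ → ℝ := fun ϑ => u 1 ϑ - u 0 ϑ with hfadef
  have hfa0 : ∀ ϑ, pd1 U (0, ϑ) = fa ϑ := by
    intro ϑ
    have h1 := hrep 1 ϑ
    rw [hfadef]
    linear_combination -h1
  have hrep' : ∀ y ϑ, u y ϑ = fb ϑ + fa ϑ * y := by
    intro y ϑ
    rw [hrep y ϑ, hfa0 ϑ]
  have hfbc : ContDiff ℝ (⊤ : ℕ∞) fb :=
    hUc.comp ((contDiff_const (c := (0 : ℝ))).prodMk contDiff_id)
  have hfac : ContDiff ℝ (⊤ : ℕ∞) fa :=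
    (hUc.comp ((contDiff_const (c := (1 : ℝ))).prodMk contDiff_id)).sub hfbc
  have hfbper : Function.Periodic fb (2 * π) := fun t => hper 0 t
  have hfaper : Function.Periodic fa (2 * π) := by
    intro t
    have h1 := hper 1 t
    have h2 := hper 0 t
    simp only [hfadef]
    rw [h1, h2]
  have hfbd : Differentiable ℝ fb := hfbc.differentiable (by simp)
  have hfad : Differentiable ℝ fa := hfac.differentiable (by simp)
  have hfb1 : ContDiff ℝ (⊤ : ℕ∞) (deriv fb) := deriv_contDiff_top hfbc
  have hfa1 : ContDiff ℝ (⊤ : ℕ∞) (deriv fa) := deriv_contDiff_top hfac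
  have ht3 : ∀ y ϑ : ℝ, deriv (fun t => u y t) ϑ = deriv fb ϑ + deriv fa ϑ * y := by
    intro y ϑ
    have hfn : (fun t => u y t) = fun t => fb t + fa t * y := funext fun t => hrep' y t
    rw [hfn]
    exact ((hfbd ϑ).hasDerivAt.add ((hfad ϑ).hasDerivAt.mul_const y)).deriv
  have ht4 : ∀ y ϑ : ℝ, deriv (deriv (fun t => u y t)) ϑ
      = deriv (deriv fb) ϑ + deriv (deriv fa) ϑ * y := by
    intro y ϑ
    have hfn : deriv (fun t => u y t) = fun t => deriv fb t + deriv fa t * y :=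
      funext fun t => ht3 y t
    rw [hfn]
    exact (((hfb1.differentiable (by simp)) ϑ).hasDerivAt.add
      (((hfa1.differentiable (by simp)) ϑ).hasDerivAt.mul_const y)).deriv
  have ht1 : ∀ y ϑ : ℝ, deriv (fun s => u s ϑ) y = fa ϑ := by
    intro y ϑ
    have hfn : (fun s => u s ϑ) = fun s => fb ϑ + fa ϑ * s := funext fun s => hrep' s ϑ
    rw [hfn]
    have h0 : HasDerivAt (fun s => fb ϑ + fa ϑ * s) (fa ϑ) y := by
      have h1 := (hasDerivAt_const y (fb ϑ)).add ((hasDerivAt_id y).const_mul (fa ϑ))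
      refine h1.congr_deriv ?_
      ring
    exact h0.deriv
  have ht2 : ∀ y ϑ : ℝ, deriv (deriv (fun s => u s ϑ)) y = 0 := by
    intro y ϑ
    have hfn : deriv (fun s => u s ϑ) = fun _ => fa ϑ := funext fun s => ht1 s ϑ
    rw [hfn]
    exact deriv_const y (fa ϑ)
  have hEQ : ∀ y ϑ : ℝ,
      0 - y / 2 * fa ϑ + 1 / 2 * (deriv (deriv fb) ϑ + deriv (deriv fa) ϑ * y)
        + (fb ϑ + fa ϑ * y) = lam * (fb ϑ + fa ϑ * y) := by
    intro y ϑ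
    have h := heig y ϑ
    unfold OU at h
    rw [ht2 y ϑ, ht1 y ϑ, ht4 y ϑ, hrep' y ϑ] at h
    exact h
  have hfb_ode : ∀ ϑ, deriv (deriv fb) ϑ = (2 * lam - 2) * fb ϑ := by
    intro ϑ
    have h := hEQ 0 ϑ
    linear_combination 2 * h
  have hfa_ode : ∀ ϑ, deriv (deriv fa) ϑ = (2 * lam - 1) * fa ϑ := by
    intro ϑ
    have h0 := hEQ 0 ϑ
    have h1 := hEQ 1 ϑ
    linear_combination 2 * h1 - 2 * h0
  rcases eq_or_ne lam 1 with hl1 | hl1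
  · left
    have hfa0' : ∀ x, fa x = 0 :=
      ode_pos (c := 2 * lam - 1) (by rw [hl1]; norm_num) hfac hfaper hfa_ode
    have hfb0' : ∀ x, fb x = fb 0 :=
      ode_zero hfbc hfbper (fun x => by rw [hfb_ode x, hl1]; ring)
    have huc : ∀ y ϑ : ℝ, u y ϑ = fb 0 := fun y ϑ => by
      rw [hrep' y ϑ, hfa0' ϑ, hfb0' ϑ]; ring
    obtain ⟨y, ϑ, hyϑ⟩ := hne
    exact ⟨hl1, fb 0, fun h0 => hyϑ (by rw [huc y ϑ, h0]), huc⟩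
  rcases eq_or_ne lam (1 / 2 : ℝ) with hl2 | hl2
  · right
    have hfa0' : ∀ x, fa x = fa 0 :=
      ode_zero hfac hfaper (fun x => by rw [hfa_ode x, hl2]; ring)
    have hfbform := ode_neg (c := (-1 : ℝ)) (by norm_num) hfbc
      (fun x => by rw [hfb_ode x, hl2]; ring)
    have hs1 : Real.sqrt (-(-1 : ℝ)) = 1 := by rw [neg_neg, Real.sqrt_one]
    have hufm : ∀ y ϑ : ℝ, u y ϑ = fa 0 * y + fb 0 * Real.cos ϑ + deriv fb 0 * Real.sin ϑ := by
      intro y ϑ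
      rw [hrep' y ϑ, hfa0' ϑ, hfbform ϑ, hs1, one_mul, div_one]
      ring
    refine ⟨hl2, fa 0, fb 0, deriv fb 0, ?_, hufm⟩
    by_contra hall
    push_neg at hall
    obtain ⟨h1, h2, h3⟩ := hall
    obtain ⟨y, ϑ, hyϑ⟩ := hne
    exact hyϑ (by rw [hufm y ϑ, h1, h2, h3]; ring)
  · exfalso
    have hfa0' : ∀ x, fa x = 0 := by
      rcases lt_trichotomy (2 * lam - 1) 0 with h | h | h
      · exact ode_neg_per h (by linarith) (by intro hcc; linarith) hfac hfaper hfa_ode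
      · exact absurd (by linarith : lam = 1 / 2) hl2
      · exact ode_pos h hfac hfaper hfa_ode
    have hfb0' : ∀ x, fb x = 0 := by
      rcases lt_trichotomy (2 * lam - 2) 0 with h | h | h
      · exact ode_neg_per h (by linarith) (by intro hcc; apply hl2; linarith) hfbc hfbper hfb_ode
      · exact absurd (by linarith : lam = 1) hl1
      · exact ode_pos h hfbc hfbper hfb_ode
    obtain ⟨y, ϑ, hyϑ⟩ := hne
    exact hyϑ (by rw [hrep' y ϑ, hfa0' ϑ, hfb0' ϑ]; ring)
end

section
/- Let u : ℝ → ℝ be smooth and compactly supported with ∫_ℝ u(y)·e^{−y²/4} dy = 0 and ∫_ℝ y·u(y)·e^{−y²/4} dy = 0. Then ∫_ℝ u'(y)²·e^{−y²/4} dy ≥ ∫_ℝ u(y)²·e^{−y²/4} dy. -/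
open Real MeasureTheory Set

lemma one_le_i : (1 : WithTop ℕ∞) ≤ ((⊤ : ℕ∞) : WithTop ℕ∞) := by
  exact_mod_cast (le_top : (1:ℕ∞) ≤ ⊤)

lemma smooth_deriv {f : ℝ → ℝ} (hf : ContDiff ℝ ((⊤:ℕ∞)) f) : ContDiff ℝ ((⊤:ℕ∞)) (deriv f) :=
  (contDiff_infty_iff_deriv.mp hf).2

lemma smooth_weight : ContDiff ℝ ((⊤:ℕ∞)) (fun y : ℝ => Real.exp (-(y ^ 2) / 4)) := by
  apply Real.contDiff_exp.comp
  exact (contDiff_id.pow 2).neg.div_const 4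

lemma hasDerivAt_weight (y : ℝ) :
    HasDerivAt (fun y : ℝ => Real.exp (-(y ^ 2) / 4)) (-(y/2) * Real.exp (-(y ^ 2) / 4)) y := by
  have h0 : HasDerivAt (fun y : ℝ => -(y ^ 2) / 4) (-(y/2)) y := by
    have : HasDerivAt (fun y : ℝ => y ^ 2) (2*y) y := by simpa using hasDerivAt_pow 2 y
    have := this.neg.div_const 4
    exact this.congr_deriv (by ring)
  have := h0.exp
  exact this.congr_deriv (by ring)

lemma integrable_aux {f : ℝ → ℝ} (hf : Continuous f) (hs : HasCompactSupport f) :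
    MeasureTheory.Integrable (fun y : ℝ => f y * Real.exp (-(y ^ 2) / 4)) := by
  apply Continuous.integrable_of_hasCompactSupport
  · exact hf.mul (Real.continuous_exp.comp (by continuity))
  · exact hs.mul_right

lemma hcs_sub {f g : ℝ → ℝ} (hf : HasCompactSupport f) (hg : HasCompactSupport g) :
    HasCompactSupport (fun y => f y - g y) := by
  have := hf.add hg.neg
  rw [show (fun y => f y - g y) = f + -g from funext fun y => by simp [sub_eq_add_neg]]
  exact this

lemma ibp (φ : ℝ → ℝ) (hφ : ContDiff ℝ ((⊤:ℕ∞)) φ) (hs : HasCompactSupport φ) :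
    ∫ y : ℝ, (deriv φ y - y/2 * φ y) * Real.exp (-(y ^ 2) / 4) = 0 := by
  set F : ℝ → ℝ := fun y => φ y * Real.exp (-(y ^ 2) / 4) with hFdef
  have hφd : Differentiable ℝ φ := hφ.differentiable (by simp)
  have hFd : ∀ y, HasDerivAt F ((deriv φ y - y/2 * φ y) * Real.exp (-(y ^ 2) / 4)) y := by
    intro y
    have := ((hφd y).hasDerivAt).mul (hasDerivAt_weight y)
    exact this.congr_deriv (by ring)
  have hFs : HasCompactSupport F := hs.mul_right
  have hF1 : ContDiff ℝ 1 F := (hφ.mul smooth_weight).of_le (by exact_mod_cast (le_top : (1:ℕ∞) ≤ ⊤))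
  have hderiv : deriv F = fun y => (deriv φ y - y/2 * φ y) * Real.exp (-(y ^ 2) / 4) :=
    funext fun y => (hFd y).deriv
  have hint : Integrable (deriv F) := by
    rw [hderiv]
    refine integrable_aux ?_ ?_
    · exact ((smooth_deriv hφ).continuous).sub ((continuous_id.div_const 2).mul hφ.continuous)
    · exact hcs_sub hs.deriv hs.mul_left
  have h1 := HasCompactSupport.integral_Iic_deriv_eq hF1 hFs 0
  have h2 := HasCompactSupport.integral_Ioi_deriv_eq hF1 hFs 0
  calc ∫ y : ℝ, (deriv φ y - y/2 * φ y) * Real.exp (-(y ^ 2) / 4) = ∫ y, deriv F y := by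
        rw [hderiv]
    _ = (∫ y in Iic 0, deriv F y) + ∫ y in Ioi 0, deriv F y :=
        (intervalIntegral.integral_Iic_add_Ioi hint.integrableOn hint.integrableOn).symm
    _ = F 0 + -F 0 := by rw [h1, h2]
    _ = 0 := by ring

lemma adjoint (h ψ : ℝ → ℝ) (hh : ContDiff ℝ ((⊤:ℕ∞)) h) (hhs : HasCompactSupport h)
    (hψ : ContDiff ℝ ((⊤:ℕ∞)) ψ) :
    ∫ y : ℝ, (y/2 * h y - deriv h y) * ψ y * Real.exp (-(y ^ 2) / 4)
      = ∫ y : ℝ, h y * deriv ψ y * Real.exp (-(y ^ 2) / 4) := by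
  have hd : Differentiable ℝ h := hh.differentiable (by simp)
  have hψd : Differentiable ℝ ψ := hψ.differentiable (by simp)
  have hibp := ibp (fun y => h y * ψ y) (hh.mul hψ) (hhs.mul_right)
  have hder : ∀ y : ℝ, deriv (fun y => h y * ψ y) y = deriv h y * ψ y + h y * deriv ψ y :=
    fun y => deriv_mul (hd y) (hψd y)
  have h1 : Integrable (fun y : ℝ => h y * deriv ψ y * Real.exp (-(y ^ 2) / 4)) :=
    integrable_aux (hh.continuous.mul (smooth_deriv hψ).continuous) hhs.mul_right
  have h2 : Integrable (fun y : ℝ => (y/2 * h y - deriv h y) * ψ y * Real.exp (-(y ^ 2) / 4)) :=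
    integrable_aux
      ((((continuous_id.div_const 2).mul hh.continuous).sub (smooth_deriv hh).continuous).mul
        hψ.continuous)
      ((hcs_sub hhs.mul_left hhs.deriv).mul_right)
  have hz : ∫ y : ℝ, (h y * deriv ψ y * Real.exp (-(y ^ 2) / 4)
      - (y/2 * h y - deriv h y) * ψ y * Real.exp (-(y ^ 2) / 4)) = 0 := by
    rw [← hibp]
    congr 1
    funext y
    rw [hder y]
    ring
  rw [integral_sub h1 h2] at hz
  linarith

lemma deriv_astar (h : ℝ → ℝ) (hh : ContDiff ℝ ((⊤:ℕ∞)) h) (y : ℝ) :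
    deriv (fun y => y/2 * h y - deriv h y) y
      = (y/2 * deriv h y - deriv (deriv h) y) + (1/2) * h y := by
  have hd : Differentiable ℝ h := hh.differentiable (by simp)
  have hdd : Differentiable ℝ (deriv h) := (smooth_deriv hh).differentiable (by simp)
  have h1 : HasDerivAt (fun y : ℝ => y/2 * h y) (1/2 * h y + y/2 * deriv h y) y := by
    have := ((hasDerivAt_id y).div_const 2).mul (hd y).hasDerivAt
    exact this.congr_deriv (by simp only [id])
  have h2 : HasDerivAt (deriv h) (deriv (deriv h) y) y := (hdd y).hasDerivAt
  rw [HasDerivAt.deriv (f := fun y => y/2 * h y - deriv h y) (h1.sub h2)]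
  ring

lemma astar_sq (h : ℝ → ℝ) (hh : ContDiff ℝ ((⊤:ℕ∞)) h) (hhs : HasCompactSupport h) :
    ∫ y : ℝ, (y/2 * h y - deriv h y)^2 * Real.exp (-(y ^ 2) / 4)
      = (∫ y : ℝ, (deriv h y)^2 * Real.exp (-(y ^ 2) / 4))
        + (1/2) * ∫ y : ℝ, (h y)^2 * Real.exp (-(y ^ 2) / 4) := by
  have hA : ContDiff ℝ ((⊤:ℕ∞)) (fun y => y/2 * h y - deriv h y) :=
    ((contDiff_id.div_const 2).mul hh).sub (smooth_deriv hh)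
  have step1 : ∫ y : ℝ, (y/2 * h y - deriv h y)^2 * Real.exp (-(y ^ 2) / 4)
      = ∫ y : ℝ, (y/2 * h y - deriv h y) * (fun y => y/2 * h y - deriv h y) y
          * Real.exp (-(y ^ 2) / 4) := by
    congr 1; funext y; ring
  rw [step1, adjoint h (fun y => y/2 * h y - deriv h y) hh hhs hA]
  have step2 : ∀ y : ℝ, h y * deriv (fun y => y/2 * h y - deriv h y) y * Real.exp (-(y ^ 2) / 4)
      = (y/2 * deriv h y - deriv (deriv h) y) * h y * Real.exp (-(y ^ 2) / 4)
        + (1/2) * ((h y)^2 * Real.exp (-(y ^ 2) / 4)) := by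
    intro y
    rw [deriv_astar h hh y]
    ring
  have hint1 : Integrable (fun y : ℝ =>
      (y/2 * deriv h y - deriv (deriv h) y) * h y * Real.exp (-(y ^ 2) / 4)) :=
    integrable_aux
      ((((continuous_id.div_const 2).mul (smooth_deriv hh).continuous).sub
        (smooth_deriv (smooth_deriv hh)).continuous).mul hh.continuous)
      ((hcs_sub hhs.deriv.mul_left hhs.deriv.deriv).mul_right)
  have hint2 : Integrable (fun y : ℝ => (h y)^2 * Real.exp (-(y ^ 2) / 4)) :=
    integrable_aux (hh.continuous.pow 2) (by
      have heq : (fun y : ℝ => (h y)^2) = h * h := by funext y; simp [pow_two]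
      rw [heq]; exact hhs.mul_right)
  calc ∫ y : ℝ, h y * deriv (fun y => y/2 * h y - deriv h y) y * Real.exp (-(y ^ 2) / 4)
      = ∫ y : ℝ, ((y/2 * deriv h y - deriv (deriv h) y) * h y * Real.exp (-(y ^ 2) / 4)
          + (1/2) * ((h y)^2 * Real.exp (-(y ^ 2) / 4))) := by
        congr 1; funext y; exact step2 y
    _ = (∫ y : ℝ, (y/2 * deriv h y - deriv (deriv h) y) * h y * Real.exp (-(y ^ 2) / 4))
          + (1/2) * ∫ y : ℝ, (h y)^2 * Real.exp (-(y ^ 2) / 4) := by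
        rw [integral_add hint1 (hint2.const_mul _), integral_const_mul]
    _ = (∫ y : ℝ, (deriv h y)^2 * Real.exp (-(y ^ 2) / 4))
          + (1/2) * ∫ y : ℝ, (h y)^2 * Real.exp (-(y ^ 2) / 4) := by
        rw [adjoint (deriv h) h (smooth_deriv hh) hhs.deriv hh]
        congr 1
        · congr 1; funext y; ring

lemma exists_antideriv (f : ℝ → ℝ) (hf : ContDiff ℝ ((⊤:ℕ∞)) f) (hs : HasCompactSupport f)
    (h0 : ∫ y : ℝ, f y * Real.exp (-(y ^ 2) / 4) = 0) :
    ∃ g : ℝ → ℝ, ContDiff ℝ ((⊤:ℕ∞)) g ∧ HasCompactSupport g ∧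
      ∀ y, f y = y/2 * g y - deriv g y := by
  obtain ⟨R, hR⟩ := hs.isBounded.subset_ball (0 : ℝ)
  have hRsub : tsupport f ⊆ Ioo (-R) R := by
    simpa [Real.ball_eq_Ioo] using hR
  have hfz : ∀ t : ℝ, t ∉ Ioo (-R) R → f t = 0 := fun t ht =>
    image_eq_zero_of_notMem_tsupport (fun hmem => ht (hRsub hmem))
  set w : ℝ → ℝ := fun t => f t * Real.exp (-(t ^ 2) / 4) with hwdef
  have hw : Continuous w := hf.continuous.mul (Real.continuous_exp.comp (by continuity))
  have hwsmooth : ContDiff ℝ ((⊤:ℕ∞)) w := hf.mul smooth_weight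
  set G : ℝ → ℝ := fun y => ∫ t in (-R)..y, w t with hGdef
  have hG' : ∀ y : ℝ, HasDerivAt G (w y) y := fun y =>
    (hw.integral_hasStrictDerivAt (-R) y).hasDerivAt
  have hGd : deriv G = w := funext fun y => (hG' y).deriv
  have hGsmooth : ContDiff ℝ ((⊤:ℕ∞)) G :=
    contDiff_infty_iff_deriv.mpr ⟨fun y => (hG' y).differentiableAt, hGd ▸ hwsmooth⟩
  have hGleft : ∀ y : ℝ, y ≤ -R → G y = 0 := by
    intro y hy
    have : EqOn w 0 (uIcc (-R) y) := by
      intro t ht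
      have ht' : t ≤ -R := by
        rcases le_total (-R) y with h | h
        · have := (uIcc_of_le h ▸ ht).2; linarith [(uIcc_of_le h ▸ ht).1, hy]
        · exact (uIcc_of_ge h ▸ ht).2
      have : f t = 0 := hfz t (by intro hmem; linarith [hmem.1])
      simp [hwdef, this]
    simp only [hGdef]
    rw [intervalIntegral.integral_congr this]
    simp
  have hGright : ∀ y : ℝ, R ≤ y → G y = 0 := by
    intro y hy
    have hsupp : Function.support w ⊆ Ioc (-R) y := by
      intro t ht
      have : f t ≠ 0 := by
        intro h
        apply ht
        simp [hwdef, h]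
      have htmem : t ∈ Ioo (-R) R := by
        by_contra hmem
        exact this (hfz t hmem)
      exact ⟨htmem.1, le_trans htmem.2.le hy⟩
    simp only [hGdef]
    rw [intervalIntegral.integral_eq_integral_of_support_subset hsupp]
    exact h0
  refine ⟨fun y => -(Real.exp (y ^ 2 / 4) * G y), ?_, ?_, ?_⟩
  · exact ((Real.contDiff_exp.comp ((contDiff_id.pow 2).div_const 4)).mul hGsmooth).neg
  · refine HasCompactSupport.intro (isCompact_Icc (a := -R) (b := R)) ?_
    intro y hy
    rcases lt_or_ge y (-R) with h | h
    · simp [hGleft y h.le]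
    · rcases le_or_gt y R with h2 | h2
      · exact absurd ⟨h, h2⟩ hy
      · simp [hGright y h2.le]
  · intro y
    have he : HasDerivAt (fun y : ℝ => Real.exp (y ^ 2 / 4)) (y/2 * Real.exp (y ^ 2 / 4)) y := by
      have h0' : HasDerivAt (fun y : ℝ => y ^ 2 / 4) (y/2) y := by
        have : HasDerivAt (fun y : ℝ => y ^ 2) (2*y) y := by simpa using hasDerivAt_pow 2 y
        have := this.div_const 4
        exact this.congr_deriv (by ring)
      have := h0'.exp
      exact this.congr_deriv (by ring)
    have hgd : HasDerivAt (fun y : ℝ => -(Real.exp (y ^ 2 / 4) * G y))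
        (-(y/2 * Real.exp (y ^ 2 / 4) * G y + Real.exp (y ^ 2 / 4) * w y)) y := by
      have := (he.mul (hG' y)).neg
      exact this
    rw [hgd.deriv]
    have hew : Real.exp (y ^ 2 / 4) * w y = f y := by
      simp only [hwdef]
      rw [mul_comm (f y), ← mul_assoc, ← Real.exp_add]
      have : y ^ 2 / 4 + -(y ^ 2) / 4 = 0 := by ring
      rw [this, Real.exp_zero, one_mul]
    rw [← hew]
    ring

lemma hcs_sq {f : ℝ → ℝ} (hf : HasCompactSupport f) : HasCompactSupport (fun y => (f y)^2) := by
  have heq : (fun y : ℝ => (f y)^2) = f * f := by funext y; simp [pow_two]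
  rw [heq]; exact hf.mul_right

lemma astar_deriv_sq (h : ℝ → ℝ) (hh : ContDiff ℝ ((⊤:ℕ∞)) h) (hhs : HasCompactSupport h) :
    ∫ y : ℝ, (deriv (fun y => y/2 * h y - deriv h y) y)^2 * Real.exp (-(y ^ 2) / 4)
      = (∫ y : ℝ, (deriv (deriv h) y)^2 * Real.exp (-(y ^ 2) / 4))
        + (3/2) * (∫ y : ℝ, (deriv h y)^2 * Real.exp (-(y ^ 2) / 4))
        + (1/4) * ∫ y : ℝ, (h y)^2 * Real.exp (-(y ^ 2) / 4) := by
  have hcA : Continuous (fun y : ℝ => y/2 * deriv h y - deriv (deriv h) y) :=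
    ((continuous_id.div_const 2).mul (smooth_deriv hh).continuous).sub
      (smooth_deriv (smooth_deriv hh)).continuous
  have hsA : HasCompactSupport (fun y : ℝ => y/2 * deriv h y - deriv (deriv h) y) :=
    hcs_sub hhs.deriv.mul_left hhs.deriv.deriv
  have i1 : Integrable (fun y : ℝ =>
      (y/2 * deriv h y - deriv (deriv h) y)^2 * Real.exp (-(y ^ 2) / 4)) :=
    integrable_aux (hcA.pow 2) (hcs_sq hsA)
  have i2 : Integrable (fun y : ℝ =>
      (y/2 * deriv h y - deriv (deriv h) y) * h y * Real.exp (-(y ^ 2) / 4)) :=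
    integrable_aux (hcA.mul hh.continuous) hsA.mul_right
  have i3 : Integrable (fun y : ℝ => (h y)^2 * Real.exp (-(y ^ 2) / 4)) :=
    integrable_aux (hh.continuous.pow 2) (hcs_sq hhs)
  calc ∫ y : ℝ, (deriv (fun y => y/2 * h y - deriv h y) y)^2 * Real.exp (-(y ^ 2) / 4)
      = ∫ y : ℝ, ((y/2 * deriv h y - deriv (deriv h) y)^2 * Real.exp (-(y ^ 2) / 4)
          + ((y/2 * deriv h y - deriv (deriv h) y) * h y * Real.exp (-(y ^ 2) / 4)
            + (1/4) * ((h y)^2 * Real.exp (-(y ^ 2) / 4)))) := by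
        congr 1; funext y
        rw [deriv_astar h hh y]
        ring
    _ = (∫ y : ℝ, (y/2 * deriv h y - deriv (deriv h) y)^2 * Real.exp (-(y ^ 2) / 4))
          + ((∫ y : ℝ, (y/2 * deriv h y - deriv (deriv h) y) * h y * Real.exp (-(y ^ 2) / 4))
            + (1/4) * ∫ y : ℝ, (h y)^2 * Real.exp (-(y ^ 2) / 4)) := by
        have i23 : Integrable (fun y : ℝ =>
            (y/2 * deriv h y - deriv (deriv h) y) * h y * Real.exp (-(y ^ 2) / 4)
              + (1/4) * ((h y)^2 * Real.exp (-(y ^ 2) / 4))) :=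
          i2.add (i3.const_mul ((1:ℝ)/4))
        rw [integral_add i1 i23, integral_add i2 (i3.const_mul ((1:ℝ)/4)), integral_const_mul]
    _ = (∫ y : ℝ, (deriv (deriv h) y)^2 * Real.exp (-(y ^ 2) / 4))
          + (3/2) * (∫ y : ℝ, (deriv h y)^2 * Real.exp (-(y ^ 2) / 4))
          + (1/4) * ∫ y : ℝ, (h y)^2 * Real.exp (-(y ^ 2) / 4) := by
        rw [astar_sq (deriv h) (smooth_deriv hh) hhs.deriv,
          adjoint (deriv h) h (smooth_deriv hh) hhs.deriv hh]
        have : ∫ y : ℝ, deriv h y * deriv h y * Real.exp (-(y ^ 2) / 4)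
            = ∫ y : ℝ, (deriv h y)^2 * Real.exp (-(y ^ 2) / 4) := by
          congr 1; funext y; ring
        rw [this]
        ring

lemma sq_weight_nonneg (f : ℝ → ℝ) : 0 ≤ ∫ y : ℝ, (f y)^2 * Real.exp (-(y ^ 2) / 4) :=
  integral_nonneg fun y => mul_nonneg (sq_nonneg _) (Real.exp_pos _).le

lemma poincare1 (g : ℝ → ℝ) (hg : ContDiff ℝ ((⊤:ℕ∞)) g) (hgs : HasCompactSupport g)
    (h0 : ∫ y : ℝ, g y * Real.exp (-(y ^ 2) / 4) = 0) :
    (1/2) * ∫ y : ℝ, (g y)^2 * Real.exp (-(y ^ 2) / 4)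
      ≤ ∫ y : ℝ, (deriv g y)^2 * Real.exp (-(y ^ 2) / 4) := by
  obtain ⟨h, hh, hhs, hode⟩ := exists_antideriv g hg hgs h0
  have hgeq : g = fun y => y/2 * h y - deriv h y := funext hode
  have e1 : ∫ y : ℝ, (g y)^2 * Real.exp (-(y ^ 2) / 4)
      = (∫ y : ℝ, (deriv h y)^2 * Real.exp (-(y ^ 2) / 4))
        + (1/2) * ∫ y : ℝ, (h y)^2 * Real.exp (-(y ^ 2) / 4) := by
    rw [hgeq]; exact astar_sq h hh hhs
  have e2 : ∫ y : ℝ, (deriv g y)^2 * Real.exp (-(y ^ 2) / 4)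
      = (∫ y : ℝ, (deriv (deriv h) y)^2 * Real.exp (-(y ^ 2) / 4))
        + (3/2) * (∫ y : ℝ, (deriv h y)^2 * Real.exp (-(y ^ 2) / 4))
        + (1/4) * ∫ y : ℝ, (h y)^2 * Real.exp (-(y ^ 2) / 4) := by
    rw [hgeq]; exact astar_deriv_sq h hh hhs
  have n1 := sq_weight_nonneg (deriv (deriv h))
  have n2 := sq_weight_nonneg (deriv h)
  linarith [e1, e2]

/-- Second-order Gaussian Poincaré inequality for the weight `e^{−y²/4}` on ℝ: if `u` is
orthogonal to both `1` and `y`, then `∫ u'² e^{−y²/4} ≥ ∫ u² e^{−y²/4}`. -/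
theorem gaussian_poincare_second_order (u : ℝ → ℝ)
    (hu : ContDiff ℝ (⊤ : ℕ∞) u) (hsupp : HasCompactSupport u)
    (hmean : ∫ y : ℝ, u y * Real.exp (-(y ^ 2) / 4) = 0)
    (hfirst : ∫ y : ℝ, y * u y * Real.exp (-(y ^ 2) / 4) = 0) :
    ∫ y : ℝ, (deriv u y) ^ 2 * Real.exp (-(y ^ 2) / 4)
      ≥ ∫ y : ℝ, (u y) ^ 2 * Real.exp (-(y ^ 2) / 4) := by
  have hu' : ContDiff ℝ ((⊤:ℕ∞)) u := hu.of_le (by simp)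
  obtain ⟨g, hg, hgs, hode⟩ := exists_antideriv u hu' hsupp hmean
  have hueq : u = fun y => y/2 * g y - deriv g y := funext hode
  have hg0 : ∫ y : ℝ, g y * Real.exp (-(y ^ 2) / 4) = 0 := by
    calc ∫ y : ℝ, g y * Real.exp (-(y ^ 2) / 4)
        = ∫ y : ℝ, g y * deriv (fun y : ℝ => y) y * Real.exp (-(y ^ 2) / 4) := by
          congr 1; funext y; rw [deriv_id'']; ring
      _ = ∫ y : ℝ, (y/2 * g y - deriv g y) * (fun y : ℝ => y) y * Real.exp (-(y ^ 2) / 4) :=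
          (adjoint g (fun y : ℝ => y) hg hgs contDiff_id).symm
      _ = ∫ y : ℝ, y * u y * Real.exp (-(y ^ 2) / 4) := by
          congr 1; funext y; rw [← hode y]; ring
      _ = 0 := hfirst
  have e1 : ∫ y : ℝ, (u y)^2 * Real.exp (-(y ^ 2) / 4)
      = (∫ y : ℝ, (deriv g y)^2 * Real.exp (-(y ^ 2) / 4))
        + (1/2) * ∫ y : ℝ, (g y)^2 * Real.exp (-(y ^ 2) / 4) := by
    rw [hueq]; exact astar_sq g hg hgs
  have e2 : ∫ y : ℝ, (deriv u y)^2 * Real.exp (-(y ^ 2) / 4)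
      = (∫ y : ℝ, (deriv (deriv g) y)^2 * Real.exp (-(y ^ 2) / 4))
        + (3/2) * (∫ y : ℝ, (deriv g y)^2 * Real.exp (-(y ^ 2) / 4))
        + (1/4) * ∫ y : ℝ, (g y)^2 * Real.exp (-(y ^ 2) / 4) := by
    rw [hueq]; exact astar_deriv_sq g hg hgs
  have hp := poincare1 g hg hgs hg0
  have n1 := sq_weight_nonneg (deriv (deriv g))
  linarith [e1, e2]
end
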